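/- arXiv:1003.0079 — 5 statements merged into one kernel-verified Lean document; each statement's English description precedes it below -/
import Mathlib

section
/- Fix p > 1 and let w = (w_1, …, w_M) with each w_m in a Hilbert space H_m, w ≠ 0, and b ∈ ℝ be given. Then the minimizer θ of F(θ) = Σ_{m=1}^M ‖w_m‖²_{H_m} / θ_m over {θ ∈ ℝ^M : θ ≥ 0, ‖θ‖_p ≤ 1} (with convention t/0 = ∞ for t > 0 and 0/0 = 0) is given by θ_m = ‖w_m‖^{2/(p+1)} / (Σ_{m'=1}^M ‖w_{m'}‖^{2p/(p+1)})^{1/p} for all m. -/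
open scoped ENNReal

/-- Auxiliary: the key real inequality via Hölder. -/
lemma holder_aux {M : ℕ} {p : ℝ} (hp : 1 < p) (a θ : Fin M → ℝ)
    (ha : ∀ m, 0 ≤ a m) (hθ : ∀ m, 0 ≤ θ m) (hθz : ∀ m, θ m = 0 → a m = 0)
    (hsum : ∑ m, θ m ^ p ≤ 1) :
    (∑ m, a m ^ ((2 * p) / (p + 1))) ≤ (∑ m, a m ^ 2 / θ m) ^ (p / (p + 1)) := by
  have hp0 : (0:ℝ) < p := lt_trans one_pos hp
  have hp1 : (0:ℝ) < p + 1 := by linarith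
  have hconj : Real.HolderConjugate ((p + 1) / p) (p + 1) := by
    rw [Real.holderConjugate_iff]; constructor
    · rw [lt_div_iff₀ hp0]; linarith
    · field_simp
  set f : Fin M → ℝ := fun m => (a m ^ 2 / θ m) ^ (p / (p + 1)) with hf
  set g : Fin M → ℝ := fun m => θ m ^ (p / (p + 1)) with hg
  have hfg : ∀ m, f m * g m = a m ^ ((2 * p) / (p + 1)) := by
    intro m
    rcases eq_or_lt_of_le (hθ m) with h0 | h0
    · have haz : a m = 0 := hθz m h0.symm
      have e1 : (0:ℝ) ^ (p/(p+1)) = 0 := Real.zero_rpow (by positivity)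
      have e2 : (0:ℝ) ^ ((2*p)/(p+1)) = 0 := Real.zero_rpow (by positivity)
      simp [hf, hg, haz, ← h0, e1, e2]
    · have hd : a m ^ 2 / θ m * θ m = a m ^ 2 := div_mul_cancel₀ _ h0.ne'
      rw [hf, hg, ← Real.mul_rpow (div_nonneg (by positivity) (hθ m)) (hθ m), hd]
      rw [← Real.rpow_natCast (a m) 2, ← Real.rpow_mul (ha m)]
      norm_num [mul_div_assoc]

  have hfr : ∀ m, f m ^ ((p + 1) / p) = a m ^ 2 / θ m := by
    intro m
    rw [hf, ← Real.rpow_mul (div_nonneg (by positivity) (hθ m))]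
    rw [div_mul_div_comm, mul_comm p (p+1), div_self (by positivity), Real.rpow_one]
  have hgr : ∀ m, g m ^ (p + 1) = θ m ^ p := by
    intro m
    rw [hg, ← Real.rpow_mul (hθ m), div_mul_cancel₀ _ hp1.ne']
  have key := Real.inner_le_Lp_mul_Lq_of_nonneg (s := Finset.univ) hconj
      (f := f) (g := g) (fun m _ => Real.rpow_nonneg (div_nonneg (by positivity) (hθ m)) _)
      (fun m _ => Real.rpow_nonneg (hθ m) _)
  rw [Finset.sum_congr rfl (fun m _ => hfg m)] at key
  rw [Finset.sum_congr rfl (fun m _ => hfr m), Finset.sum_congr rfl (fun m _ => hgr m)] at key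
  have h2 : (∑ m, θ m ^ p) ^ ((1:ℝ) / (p + 1)) ≤ 1 := by
    apply Real.rpow_le_one _ hsum (by positivity)
    exact Finset.sum_nonneg fun m _ => Real.rpow_nonneg (hθ m) _
  have h3 : (1:ℝ) / ((p+1)/p) = p / (p + 1) := by
    rw [one_div_div]
  calc ∑ m, a m ^ ((2 * p) / (p + 1))
      ≤ (∑ m, a m ^ 2 / θ m) ^ ((1:ℝ)/((p+1)/p)) * (∑ m, θ m ^ p) ^ ((1:ℝ) / (p + 1)) := key
    _ ≤ (∑ m, a m ^ 2 / θ m) ^ (p / (p + 1)) * 1 := by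
        rw [h3]
        refine mul_le_mul_of_nonneg_left h2 ?_
        apply Real.rpow_nonneg
        refine Finset.sum_nonneg fun m _ => div_nonneg (by positivity) (hθ m)
    _ = (∑ m, a m ^ 2 / θ m) ^ (p / (p + 1)) := mul_one _

/-- Analytic `θ`-update (Prop. 2 of the paper): for `p > 1` and fixed `w ≠ 0`,
the vector `θ*` with `θ*_m = ‖w_m‖^{2/(p+1)} / (∑_{m'} ‖w_{m'}‖^{2p/(p+1)})^{1/p}`
minimizes `F(θ) = ∑_m ‖w_m‖²/θ_m` (with the conventions `t/0 = ∞` for `t > 0` and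
`0/0 = 0`, realized in `ℝ≥0∞`) over `{θ : θ ≥ 0, ‖θ‖_p ≤ 1}`. -/
theorem theta_update_pnorm (M : ℕ) (p : ℝ) (hp : 1 < p)
    (H : Fin M → Type*) [∀ m, NormedAddCommGroup (H m)] [∀ m, InnerProductSpace ℝ (H m)]
    (w : ∀ m, H m) (hw : w ≠ 0) :
    let θstar : Fin M → ℝ := fun m =>
      ‖w m‖ ^ ((2 : ℝ) / (p + 1)) /
        (∑ m', ‖w m'‖ ^ ((2 * p) / (p + 1))) ^ ((1 : ℝ) / p)
    let F : (Fin M → ℝ) → ℝ≥0∞ := fun θ =>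
      ∑ m, ENNReal.ofReal (‖w m‖ ^ 2) / ENNReal.ofReal (θ m)
    (∀ m, 0 ≤ θstar m) ∧ (∑ m, θstar m ^ p) ^ ((1 : ℝ) / p) ≤ 1 ∧
      ∀ θ : Fin M → ℝ, (∀ m, 0 ≤ θ m) → (∑ m, θ m ^ p) ^ ((1 : ℝ) / p) ≤ 1 →
        F θstar ≤ F θ := by
  intro θstar F
  have hp0 : (0:ℝ) < p := lt_trans one_pos hp
  have hp1 : (0:ℝ) < p + 1 := by linarith
  set a : Fin M → ℝ := fun m => ‖w m‖ with ha
  have ha0 : ∀ m, 0 ≤ a m := fun m => norm_nonneg _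
  set S : ℝ := ∑ m', a m' ^ ((2*p)/(p+1)) with hS
  have hS0 : 0 < S := by
    obtain ⟨m, hm⟩ : ∃ m, w m ≠ 0 := by
      by_contra h; push_neg at h; exact hw (funext h)
    have ham : 0 < a m := norm_pos_iff.mpr hm
    refine lt_of_lt_of_le (Real.rpow_pos_of_pos ham ((2*p)/(p+1))) ?_
    exact Finset.single_le_sum (fun i _ => Real.rpow_nonneg (ha0 i) _) (Finset.mem_univ m)
  have hSp : 0 < S ^ ((1:ℝ)/p) := Real.rpow_pos_of_pos hS0 _
  have hθs : ∀ m, θstar m = a m ^ ((2:ℝ)/(p+1)) / S ^ ((1:ℝ)/p) := fun m => rfl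
  have hθs0 : ∀ m, 0 ≤ θstar m := by
    intro m; rw [hθs]; exact div_nonneg (Real.rpow_nonneg (ha0 m) _) hSp.le
  refine ⟨hθs0, ?_, ?_⟩
  · -- constraint
    have hsum : ∑ m, θstar m ^ p = 1 := by
      have : ∀ m, θstar m ^ p = a m ^ ((2*p)/(p+1)) / S := by
        intro m
        rw [hθs, Real.div_rpow (Real.rpow_nonneg (ha0 m) _) hSp.le,
          ← Real.rpow_mul (ha0 m), ← Real.rpow_mul hS0.le, one_div_mul_cancel hp0.ne',
          Real.rpow_one, div_mul_eq_mul_div, mul_div_assoc]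
      rw [Finset.sum_congr rfl (fun m _ => this m), ← Finset.sum_div, ← hS,
        div_self hS0.ne']
    rw [hsum, Real.one_rpow]
  · -- optimality
    intro θ hθ0 hθp
    have hsum1 : ∑ m, θ m ^ p ≤ 1 := by
      have h0 : (0:ℝ) ≤ ∑ m, θ m ^ p :=
        Finset.sum_nonneg fun m _ => Real.rpow_nonneg (hθ0 m) _
      have := Real.rpow_le_rpow (Real.rpow_nonneg h0 _) hθp hp0.le
      rwa [← Real.rpow_mul h0, one_div_mul_cancel hp0.ne', Real.rpow_one,
        Real.one_rpow] at this
    by_cases hcase : ∀ m, a m ≠ 0 → θ m ≠ 0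
    · -- finite case
      have hθz : ∀ m, θ m = 0 → a m = 0 := by
        intro m h; by_contra h'; exact hcase m h' h
      -- F θ as ofReal
      have hFθ : F θ = ENNReal.ofReal (∑ m, a m ^ 2 / θ m) := by
        rw [show F θ = ∑ m, ENNReal.ofReal (a m ^ 2) / ENNReal.ofReal (θ m) from rfl,
          ENNReal.ofReal_sum_of_nonneg (fun m _ => div_nonneg (by positivity) (hθ0 m))]
        refine Finset.sum_congr rfl fun m _ => ?_
        rcases eq_or_lt_of_le (hθ0 m) with h0 | h0
        · rw [hθz m h0.symm]; simp [← h0]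
        · rw [ENNReal.ofReal_div_of_pos h0]
      have hθsz : ∀ m, θstar m = 0 → a m = 0 := by
        intro m h
        rw [hθs, div_eq_zero_iff] at h
        rcases h with h | h
        · rcases eq_or_lt_of_le (ha0 m) with h' | h'
          · exact h'.symm
          · exact absurd h (Real.rpow_pos_of_pos h' _).ne'
        · exact absurd h hSp.ne'
      have hFθs : F θstar = ENNReal.ofReal (∑ m, a m ^ 2 / θstar m) := by
        rw [show F θstar = ∑ m, ENNReal.ofReal (a m ^ 2) / ENNReal.ofReal (θstar m) from rfl,
          ENNReal.ofReal_sum_of_nonneg (fun m _ => div_nonneg (by positivity) (hθs0 m))]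
        refine Finset.sum_congr rfl fun m _ => ?_
        rcases eq_or_lt_of_le (hθs0 m) with h0 | h0
        · rw [hθsz m h0.symm]; simp [← h0]
        · rw [ENNReal.ofReal_div_of_pos h0]
      -- value at θstar
      have hterm : ∀ m, a m ^ 2 / θstar m = a m ^ ((2*p)/(p+1)) * S ^ ((1:ℝ)/p) := by
        intro m
        rcases eq_or_lt_of_le (ha0 m) with h' | h'
        · rw [hθs, ← h']
          rw [Real.zero_rpow (by positivity : (2:ℝ)/(p+1) ≠ 0),
            Real.zero_rpow (by positivity : (2*p)/(p+1) ≠ 0)]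
          simp
        · have h2 : a m ^ (2:ℕ) = a m ^ ((2:ℝ)) := by
            rw [← Real.rpow_natCast (a m) 2]; norm_num
          calc a m ^ 2 / θstar m
              = a m ^ 2 * S ^ ((1:ℝ)/p) / a m ^ ((2:ℝ)/(p+1)) := by
                rw [hθs m, div_div_eq_mul_div]
            _ = a m ^ ((2:ℝ)) / a m ^ ((2:ℝ)/(p+1)) * S ^ ((1:ℝ)/p) := by
                rw [mul_div_right_comm, h2]
            _ = a m ^ ((2:ℝ) - (2:ℝ)/(p+1)) * S ^ ((1:ℝ)/p) := by
                rw [Real.rpow_sub h']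
            _ = a m ^ ((2*p)/(p+1)) * S ^ ((1:ℝ)/p) := by
                rw [show (2:ℝ) - 2/(p+1) = (2*p)/(p+1) by field_simp; ring]
      have hval : ∑ m, a m ^ 2 / θstar m = S ^ ((p+1)/p) := by
        rw [Finset.sum_congr rfl (fun m _ => hterm m), ← Finset.sum_mul, ← hS]
        have : S * S ^ ((1:ℝ)/p) = S ^ (1 + (1:ℝ)/p) := by
          rw [Real.rpow_add hS0, Real.rpow_one]
        rw [this]
        congr 1
        field_simp
      rw [hFθ, hFθs, hval]
      apply ENNReal.ofReal_le_ofReal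
      -- Hölder
      have key := holder_aux hp a θ ha0 hθ0 hθz hsum1
      rw [← hS] at key
      have hT0 : (0:ℝ) ≤ ∑ m, a m ^ 2 / θ m :=
        Finset.sum_nonneg fun m _ => div_nonneg (by positivity) (hθ0 m)
      have := Real.rpow_le_rpow hS0.le key (by positivity : (0:ℝ) ≤ (p+1)/p)
      rwa [← Real.rpow_mul hT0, div_mul_div_comm, mul_comm p (p+1),
        div_self (by positivity : (p+1)*p ≠ 0), Real.rpow_one] at this
    · -- infinite case
      push_neg at hcase
      obtain ⟨m, ham, hθm⟩ := hcase
      have hterm : ENNReal.ofReal (a m ^ 2) / ENNReal.ofReal (θ m) = ⊤ := by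
        rw [hθm, ENNReal.ofReal_zero, ENNReal.div_zero]
        rw [ne_eq, ENNReal.ofReal_eq_zero, not_le]
        have : 0 < a m := lt_of_le_of_ne (ha0 m) (Ne.symm ham)
        positivity
      have hle : ENNReal.ofReal (a m ^ 2) / ENNReal.ofReal (θ m) ≤
          ∑ i, ENNReal.ofReal (a i ^ 2) / ENNReal.ofReal (θ i) :=
        Finset.single_le_sum
          (f := fun i => ENNReal.ofReal (a i ^ 2) / ENNReal.ofReal (θ i))
          (fun i _ => zero_le) (Finset.mem_univ m)
      rw [hterm] at hle
      have hFtop : F θ = ⊤ := top_le_iff.mp hle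
      rw [hFtop]; exact le_top
end

section
/- Corollary (ℓp Rademacher bound): Let M > 1 and assume k_m(x,x) ≤ R² for all x and m = 1,…,M. If the ℓ1-norm MKL class satisfies R(H_M^1) ≤ √(c·e·⌈log M⌉·R²/n) with c = 23/22, then for all p ∈ [1, ∞], R(H_M^p) ≤ √(c·e·M^{1/p*}·⌈log M⌉·R²/n), where p* = p/(p-1). -/
open scoped ENNReal RealInnerProductSpace
open MeasureTheory

local notation:max n "‼" => Nat.doubleFactorial n


/-- `(2m-1)‼ * (2^m * m!) = (2m)!` -/
lemma aux_dfac_fac : ∀ m : ℕ, (2*m-1)‼ * (2^m * m.factorial) = (2*m).factorial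
  | 0 => by simp [Nat.doubleFactorial]
  | (m+1) => by
      have h2 : 2*(m+1)-1 = 2*m+1 := by omega
      have h4 : (2*(m+1)).factorial = (2*(m+1))‼ * (2*m+1)‼ := by
        rw [show 2*(m+1) = (2*m+1)+1 by omega, Nat.factorial_eq_mul_doubleFactorial]
      rw [h2, h4, Nat.doubleFactorial_two_mul]
      ring

lemma aux_key (j : ℕ) : 2^j * j.factorial ≤ (2*j).factorial := by
  calc 2^j * j.factorial = 1 * (2^j * j.factorial) := (one_mul _).symm
    _ ≤ (2*j-1)‼ * (2^j * j.factorial) :=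
        Nat.mul_le_mul_right _ (Nat.doubleFactorial_pos _)
    _ = (2*j).factorial := aux_dfac_fac j

lemma aux_comb (q j : ℕ) (h : j ≤ q) :
    (2*q).choose (2*j) * (2*(q-j)-1)‼ ≤ (2*q-1)‼ * q.choose j := by
  have hX : 0 < 2^(q-j) * (q-j).factorial * (2^j * j.factorial) * (2*j).factorial := by
    positivity
  refine Nat.le_of_mul_le_mul_right ?_ hX
  have e1 : (2*q).choose (2*j) * (2*(q-j)-1)‼ *
      (2^(q-j) * (q-j).factorial * (2^j * j.factorial) * (2*j).factorial)
      = (2*q).factorial * (2^j * j.factorial) := by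
    have h1 : (2*(q-j)-1)‼ * (2^(q-j) * (q-j).factorial) = (2*(q-j)).factorial :=
      aux_dfac_fac _
    have h3 : 2*(q-j) = 2*q - 2*j := by omega
    have h2 : (2*q).choose (2*j) * (2*j).factorial * (2*q - 2*j).factorial
        = (2*q).factorial := Nat.choose_mul_factorial_mul_factorial (by omega)
    calc (2*q).choose (2*j) * (2*(q-j)-1)‼ *
        (2^(q-j) * (q-j).factorial * (2^j * j.factorial) * (2*j).factorial)
        = (2*q).choose (2*j) * (2*j).factorial *
            ((2*(q-j)-1)‼ * (2^(q-j) * (q-j).factorial)) * (2^j * j.factorial) := by ring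
      _ = (2*q).choose (2*j) * (2*j).factorial * (2*q - 2*j).factorial
            * (2^j * j.factorial) := by rw [h1, h3]
      _ = (2*q).factorial * (2^j * j.factorial) := by rw [h2]
  have e2 : (2*q-1)‼ * q.choose j *
      (2^(q-j) * (q-j).factorial * (2^j * j.factorial) * (2*j).factorial)
      = (2*q).factorial * (2*j).factorial := by
    have h4 : q.choose j * j.factorial * (q-j).factorial = q.factorial :=
      Nat.choose_mul_factorial_mul_factorial h
    have h5 : 2^(q-j) * 2^j = 2^q := by rw [← pow_add]; congr 1; omega
    calc (2*q-1)‼ * q.choose j *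
        (2^(q-j) * (q-j).factorial * (2^j * j.factorial) * (2*j).factorial)
        = (2*q-1)‼ * (2^(q-j) * 2^j * (q.choose j * j.factorial * (q-j).factorial))
            * (2*j).factorial := by ring
      _ = (2*q-1)‼ * (2^q * q.factorial) * (2*j).factorial := by rw [h4, h5]
      _ = (2*q).factorial * (2*j).factorial := by rw [aux_dfac_fac q]
  rw [e1, e2]
  exact Nat.mul_le_mul_left _ (aux_key j)

lemma aux_dfac_le (q : ℕ) (h : 1 ≤ q) : ((2*q-1)‼ : ℝ) ≤ (q:ℝ)^q := by
  induction q, h using Nat.le_induction with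
  | base => simp [Nat.doubleFactorial]
  | succ q hq ih =>
    have hstep : (2*(q+1)-1)‼ = (2*q+1) * (2*q-1)‼ := by
      have h1 : 2*(q+1)-1 = (2*q-1)+2 := by omega
      rw [h1, Nat.doubleFactorial_add_two]
      congr 1
      omega
    rw [hstep]
    push_cast
    have hq0 : (0:ℝ) < q := by exact_mod_cast hq
    have hqne : (q:ℝ) ≠ 0 := ne_of_gt hq0
    have hbern : (2:ℝ) ≤ (1 + 1/(q:ℝ))^q := by
      have h2 := one_add_mul_le_pow (a := 1/(q:ℝ))
        (le_trans (by norm_num : (-2:ℝ) ≤ 0) (by positivity)) q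
      have h3 : (q:ℝ) * (1/(q:ℝ)) = 1 := by field_simp
      linarith
    have hqq : ((q:ℝ)+1)^(q+1) = ((q:ℝ)+1) * ((1+1/(q:ℝ))^q * (q:ℝ)^q) := by
      have h6 : ((1:ℝ)+1/(q:ℝ)) * q = (q:ℝ)+1 := by field_simp
      rw [pow_succ, ← mul_pow, h6]
      ring
    have hqq0 : (0:ℝ) ≤ (q:ℝ)^q := by positivity
    calc ((2:ℝ)*q+1) * ((2*q-1)‼ : ℝ) ≤ ((2:ℝ)*q+1) * (q:ℝ)^q := by
          apply mul_le_mul_of_nonneg_left ih (by positivity)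
      _ ≤ ((q:ℝ)+1) * (2 * (q:ℝ)^q) := by nlinarith
      _ ≤ ((q:ℝ)+1) * ((1+1/(q:ℝ))^q * (q:ℝ)^q) := by
          apply mul_le_mul_of_nonneg_left _ (by positivity)
          exact mul_le_mul_of_nonneg_right hbern hqq0
      _ = ((q:ℝ)+1)^(q+1) := hqq.symm

lemma aux_convex {c d z : ℝ} (q : ℕ) (hc : 0 ≤ c) (h1 : c ≤ z) (h2 : z ≤ d) :
    z^q + (c + d - z)^q ≤ c^q + d^q := by
  have hy : c ≤ c + d - z := by linarith
  have hy0 : 0 ≤ c + d - z := hc.trans hy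
  have hyd : c + d - z ≤ d := by linarith
  have hz0 : 0 ≤ z := hc.trans h1
  have key : (c+d-z)^q - c^q ≤ d^q - z^q := by
    have e1 : (∑ i ∈ Finset.range q, d^i * z^(q-1-i)) * (d - z) = d^q - z^q :=
      geom_sum₂_mul d z q
    have e2 : (∑ i ∈ Finset.range q, (c+d-z)^i * c^(q-1-i)) * ((c+d-z) - c)
        = (c+d-z)^q - c^q := geom_sum₂_mul (c+d-z) c q
    have e3 : (c+d-z) - c = d - z := by ring
    rw [← e1, ← e2, e3]
    apply mul_le_mul_of_nonneg_right _ (by linarith)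
    apply Finset.sum_le_sum
    intro i _
    have hd0 : (0:ℝ) ≤ d := hz0.trans h2
    exact mul_le_mul (pow_le_pow_left₀ hy0 hyd i) (pow_le_pow_left₀ hc h1 _)
      (pow_nonneg hc _) (pow_nonneg hd0 _)
  linarith

lemma aux_norm_step {E : Type*} [NormedAddCommGroup E] [InnerProductSpace ℝ E]
    (S a : E) (q : ℕ) :
    ‖S + a‖^(2*q) + ‖S - a‖^(2*q) ≤ (‖S‖ + ‖a‖)^(2*q) + (‖S‖ - ‖a‖)^(2*q) := by
  have hadd : ‖S + a‖^2 = ‖S‖^2 + 2*⟪S,a⟫ + ‖a‖^2 := norm_add_sq_real S a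
  have hsub : ‖S - a‖^2 = ‖S‖^2 - 2*⟪S,a⟫ + ‖a‖^2 := norm_sub_sq_real S a
  have hcs : |⟪S,a⟫| ≤ ‖S‖ * ‖a‖ := abs_real_inner_le_norm S a
  have hcs1 : -(‖S‖*‖a‖) ≤ ⟪S,a⟫ := neg_le_of_abs_le hcs
  have hcs2 : ⟪S,a⟫ ≤ ‖S‖*‖a‖ := le_of_abs_le hcs
  have h1 : (‖S‖ - ‖a‖)^2 ≤ ‖S + a‖^2 := by nlinarith [hadd]
  have h2 : ‖S + a‖^2 ≤ (‖S‖ + ‖a‖)^2 := by nlinarith [hadd]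
  have h3 : (‖S‖ - ‖a‖)^2 + (‖S‖ + ‖a‖)^2 - ‖S + a‖^2 = ‖S - a‖^2 := by
    rw [hadd, hsub]; ring
  have h0 : (0:ℝ) ≤ (‖S‖ - ‖a‖)^2 := sq_nonneg _
  have := aux_convex (c := (‖S‖ - ‖a‖)^2) (d := (‖S‖ + ‖a‖)^2) (z := ‖S + a‖^2)
    q h0 h1 h2
  rw [h3] at this
  calc ‖S + a‖^(2*q) + ‖S - a‖^(2*q)
      = (‖S + a‖^2)^q + (‖S - a‖^2)^q := by rw [pow_mul, pow_mul]
    _ ≤ ((‖S‖ - ‖a‖)^2)^q + ((‖S‖ + ‖a‖)^2)^q := this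
    _ = (‖S‖ + ‖a‖)^(2*q) + (‖S‖ - ‖a‖)^(2*q) := by rw [← pow_mul, ← pow_mul]; ring

lemma aux_even_binom (a b : ℝ) (q : ℕ) :
    (a+b)^(2*q) + (a-b)^(2*q)
      = ∑ j ∈ Finset.range (q+1),
          2 * ((2*q).choose (2*j) : ℝ) * a^(2*j) * b^(2*(q-j)) := by
  have h2 : (a - b)^(2*q)
      = ∑ k ∈ Finset.range (2*q+1), a^k * (-b)^(2*q-k) * ((2*q).choose k : ℝ) := by
    rw [← add_pow]; ring_nf
  rw [add_pow, h2, ← Finset.sum_add_distrib]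
  have hterm : ∀ k ∈ Finset.range (2*q+1),
      a^k * b^(2*q-k) * ((2*q).choose k:ℝ) + a^k * (-b)^(2*q-k) * ((2*q).choose k:ℝ)
      = (1 + (-1:ℝ)^k) * (a^k * b^(2*q-k) * ((2*q).choose k:ℝ)) := by
    intro k hk
    have hk' : k ≤ 2*q := by
      simp only [Finset.mem_range] at hk; omega
    have hsign : (-b)^(2*q-k) = (-1:ℝ)^k * b^(2*q-k) := by
      rw [neg_pow]
      congr 1
      have e1 : (-1:ℝ)^(2*q-k) * (-1:ℝ)^k = 1 := by
        rw [← pow_add, show 2*q-k+k = 2*q by omega, pow_mul]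
        norm_num
      have e2 : ((-1:ℝ)^k) * ((-1:ℝ)^k) = 1 := by
        rw [← mul_pow]; norm_num
      calc (-1:ℝ)^(2*q-k) = (-1:ℝ)^(2*q-k) * (((-1:ℝ)^k) * ((-1:ℝ)^k)) := by
            rw [e2, mul_one]
        _ = ((-1:ℝ)^(2*q-k) * (-1:ℝ)^k) * (-1:ℝ)^k := by ring
        _ = (-1:ℝ)^k := by rw [e1, one_mul]
    rw [hsign]; ring
  rw [Finset.sum_congr rfl hterm]
  have hfil : ∑ k ∈ Finset.range (2*q+1),
        (1 + (-1:ℝ)^k) * (a^k * b^(2*q-k) * ((2*q).choose k:ℝ))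
      = ∑ k ∈ (Finset.range (2*q+1)).filter (fun k => Even k),
        (1 + (-1:ℝ)^k) * (a^k * b^(2*q-k) * ((2*q).choose k:ℝ)) := by
    refine (Finset.sum_filter_of_ne ?_).symm
    intro k _ hne
    by_contra hodd
    rw [Nat.not_even_iff_odd] at hodd
    rw [hodd.neg_one_pow] at hne
    simp at hne
  have himg : (Finset.range (2*q+1)).filter (fun k => Even k)
      = (Finset.range (q+1)).image (fun j => 2*j) := by
    ext k
    simp only [Finset.mem_filter, Finset.mem_range, Finset.mem_image]
    constructor
    · rintro ⟨hk, r, rfl⟩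
      exact ⟨r, by omega, by omega⟩
    · rintro ⟨j, hj, rfl⟩
      exact ⟨by omega, ⟨j, by omega⟩⟩
  rw [hfil, himg, Finset.sum_image (by intro x _ y _ hxy; simp only at hxy; omega)]
  refine Finset.sum_congr rfl fun j hj => ?_
  have h4 : (-1:ℝ)^(2*j) = 1 := by rw [pow_mul]; norm_num
  rw [h4, show 2*q - 2*j = 2*(q-j) by omega]
  ring

lemma khintchine {E : Type*} [NormedAddCommGroup E] [InnerProductSpace ℝ E] :
    ∀ (n : ℕ) (q : ℕ) (a : Fin n → E),
      ∑ σ : Fin n → Bool, ‖∑ i, (if σ i then (1:ℝ) else -1) • a i‖ ^ (2*q)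
        ≤ (2:ℝ)^n * ((2*q-1)‼ : ℝ) * (∑ i, ‖a i‖^2)^q := by
  intro n
  induction n with
  | zero =>
    intro q a
    have h0 : ∀ σ : Fin 0 → Bool,
        ‖∑ i : Fin 0, (if σ i then (1:ℝ) else -1) • a i‖ ^ (2*q) = (0:ℝ)^(2*q) := by
      intro σ; simp
    rw [Finset.sum_congr rfl fun σ _ => h0 σ, Finset.sum_const, Finset.card_univ]
    have hcard : Fintype.card (Fin 0 → Bool) = 1 := by simp
    rw [hcard]
    have hempty : (∑ i : Fin 0, ‖a i‖^2) = 0 := by simp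
    rw [hempty]
    cases q with
    | zero => simp [Nat.doubleFactorial]
    | succ q =>
      rw [zero_pow (by omega : 2*(q+1) ≠ 0), zero_pow (q.succ_ne_zero)]
      simp
  | succ n ih =>
    intro q a
    have hre : ∑ σ : Fin (n+1) → Bool, ‖∑ i, (if σ i then (1:ℝ) else -1) • a i‖ ^ (2*q)
        = ∑ τ : Fin n → Bool, ∑ b : Bool,
            ‖(if b then (1:ℝ) else -1) • a 0 +
              ∑ i : Fin n, (if τ i then (1:ℝ) else -1) • a i.succ‖ ^ (2*q) := by
      rw [← Equiv.sum_comp (Fin.consEquiv (fun _ : Fin (n+1) => Bool))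
        (fun σ => ‖∑ i, (if σ i then (1:ℝ) else -1) • a i‖ ^ (2*q)),
        Fintype.sum_prod_type_right]
      refine Finset.sum_congr rfl fun τ _ => Finset.sum_congr rfl fun b _ => ?_
      congr 1
      rw [Fin.sum_univ_succ]
      simp [Fin.consEquiv]
    rw [hre]
    set T : ℝ := ∑ i : Fin n, ‖a i.succ‖^2 with hT
    have hT0 : 0 ≤ T := Finset.sum_nonneg fun i _ => sq_nonneg _
    calc ∑ τ : Fin n → Bool, ∑ b : Bool,
            ‖(if b then (1:ℝ) else -1) • a 0 +
              ∑ i : Fin n, (if τ i then (1:ℝ) else -1) • a i.succ‖ ^ (2*q)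
        = ∑ τ : Fin n → Bool,
            (‖(∑ i : Fin n, (if τ i then (1:ℝ) else -1) • a i.succ) + a 0‖ ^ (2*q)
            + ‖(∑ i : Fin n, (if τ i then (1:ℝ) else -1) • a i.succ) - a 0‖ ^ (2*q)) := by
          refine Finset.sum_congr rfl fun τ _ => ?_
          rw [Fintype.sum_bool]
          simp only [if_true, Bool.false_eq_true, if_false, one_smul, neg_smul]
          rw [add_comm (a 0), neg_add_eq_sub]
      _ ≤ ∑ τ : Fin n → Bool, ∑ j ∈ Finset.range (q+1),
            2 * ((2*q).choose (2*j) : ℝ) * ‖a 0‖^(2*j) *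
              ‖∑ i : Fin n, (if τ i then (1:ℝ) else -1) • a i.succ‖^(2*(q-j)) := by
          refine Finset.sum_le_sum fun τ _ => ?_
          calc ‖(∑ i : Fin n, (if τ i then (1:ℝ) else -1) • a i.succ) + a 0‖^(2*q)
                + ‖(∑ i : Fin n, (if τ i then (1:ℝ) else -1) • a i.succ) - a 0‖^(2*q)
              ≤ (‖∑ i : Fin n, (if τ i then (1:ℝ) else -1) • a i.succ‖ + ‖a 0‖)^(2*q)
                + (‖∑ i : Fin n, (if τ i then (1:ℝ) else -1) • a i.succ‖ - ‖a 0‖)^(2*q) :=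
              aux_norm_step _ (a 0) q
            _ = (‖a 0‖ + ‖∑ i : Fin n, (if τ i then (1:ℝ) else -1) • a i.succ‖)^(2*q)
                + (‖a 0‖ - ‖∑ i : Fin n, (if τ i then (1:ℝ) else -1) • a i.succ‖)^(2*q) := by
                have h1 : ‖∑ i : Fin n, (if τ i then (1:ℝ) else -1) • a i.succ‖ + ‖a 0‖
                    = ‖a 0‖ + ‖∑ i : Fin n, (if τ i then (1:ℝ) else -1) • a i.succ‖ :=
                  add_comm _ _
                have h2 : (‖∑ i : Fin n, (if τ i then (1:ℝ) else -1) • a i.succ‖ - ‖a 0‖)^(2*q)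
                    = (‖a 0‖ - ‖∑ i : Fin n, (if τ i then (1:ℝ) else -1) • a i.succ‖)^(2*q) := by
                  rw [← neg_sub (‖a 0‖), Even.neg_pow ⟨q, by ring⟩]
                rw [h1, h2]
            _ = _ := aux_even_binom _ _ q
      _ = ∑ j ∈ Finset.range (q+1), 2 * ((2*q).choose (2*j) : ℝ) * ‖a 0‖^(2*j) *
            (∑ τ : Fin n → Bool,
              ‖∑ i : Fin n, (if τ i then (1:ℝ) else -1) • a i.succ‖^(2*(q-j))) := by
          rw [Finset.sum_comm]
          exact Finset.sum_congr rfl fun j _ => (Finset.mul_sum _ _ _).symm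
      _ ≤ ∑ j ∈ Finset.range (q+1), 2 * ((2*q).choose (2*j) : ℝ) * ‖a 0‖^(2*j) *
            ((2:ℝ)^n * ((2*(q-j)-1)‼ : ℝ) * T^(q-j)) := by
          refine Finset.sum_le_sum fun j _ => ?_
          exact mul_le_mul_of_nonneg_left (ih (q-j) (fun i => a i.succ)) (by positivity)
      _ ≤ ∑ j ∈ Finset.range (q+1),
            2 * (2:ℝ)^n * ((2*q-1)‼ : ℝ) * ((q.choose j : ℝ) * (‖a 0‖^2)^j * T^(q-j)) := by
          refine Finset.sum_le_sum fun j hj => ?_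
          have hjq : j ≤ q := by simp only [Finset.mem_range] at hj; omega
          have hcast : ((2*q).choose (2*j) : ℝ) * ((2*(q-j)-1)‼ : ℝ)
              ≤ ((2*q-1)‼ : ℝ) * (q.choose j : ℝ) := by exact_mod_cast aux_comb q j hjq
          calc 2 * ((2*q).choose (2*j) : ℝ) * ‖a 0‖^(2*j)
                * ((2:ℝ)^n * ((2*(q-j)-1)‼:ℝ) * T^(q-j))
              = (((2*q).choose (2*j):ℝ) * ((2*(q-j)-1)‼:ℝ))
                  * (2 * (2:ℝ)^n * ‖a 0‖^(2*j) * T^(q-j)) := by ring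
            _ ≤ (((2*q-1)‼:ℝ) * (q.choose j:ℝ))
                  * (2 * (2:ℝ)^n * ‖a 0‖^(2*j) * T^(q-j)) := by
                apply mul_le_mul_of_nonneg_right hcast
                have : (0:ℝ) ≤ T^(q-j) := pow_nonneg hT0 _
                positivity
            _ = 2 * (2:ℝ)^n * ((2*q-1)‼:ℝ) * ((q.choose j:ℝ) * (‖a 0‖^2)^j * T^(q-j)) := by
                rw [pow_mul]; ring
      _ = (2:ℝ)^(n+1) * ((2*q-1)‼:ℝ) * (∑ i : Fin (n+1), ‖a i‖^2)^q := by
          rw [Fin.sum_univ_succ (f := fun i => ‖a i‖^2), ← hT, add_pow,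
            Finset.mul_sum]
          refine Finset.sum_congr rfl fun j _ => ?_
          ring

/-- ℓp Rademacher bound (Corollary): let `M > 1` and assume `k_m(x,x) ≤ R²`
(i.e. `‖ψ_m(x)‖² ≤ R²`) for all `x` and `m`.  If the ℓ1-norm MKL class satisfies
`R(H_M^1) ≤ √(c·e·⌈log M⌉·R²/n)` with `c = 23/22`, then for every `p ∈ [1,∞]`,
`R(H_M^p) ≤ √(c·e·M^{1/p*}·⌈log M⌉·R²/n)`, where `1/p* = 1 - 1/p`. -/
theorem rademacher_lp_bound {X : Type*} [MeasurableSpace X] (M n : ℕ) (hM : 1 < M)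
    (hn : 0 < n)
    (H : Fin M → Type*) [∀ m, NormedAddCommGroup (H m)] [∀ m, InnerProductSpace ℝ (H m)]
    (ψ : ∀ m, X → H m) (μ : Measure (Fin n → X)) [IsProbabilityMeasure μ]
    (R : ℝ) (hR : ∀ (x : X) (m : Fin M), ‖ψ m x‖ ^ 2 ≤ R ^ 2) :
    let c : ℝ := 23 / 22
    let Rad : ℝ≥0∞ → ℝ := fun pp =>
      ∫ xs, (1 / (2 ^ n : ℝ)) * ∑ σ : Fin n → Bool,
        sSup {r : ℝ | ∃ (w : ∀ m, H m) (θ : Fin M → ℝ),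
          (∑ m, ‖w m‖ ^ 2) ≤ 1 ∧ (∀ m, 0 ≤ θ m) ∧
          (if pp = ∞ then ⨆ m, |θ m| else (∑ m, |θ m| ^ pp.toReal) ^ (1 / pp.toReal)) ≤ 1 ∧
          r = (1 / (n : ℝ)) * ∑ i, (if σ i then (1 : ℝ) else -1) *
                ∑ m, Real.sqrt (θ m) * ⟪w m, ψ m (xs i)⟫} ∂μ
    Rad 1 ≤ Real.sqrt (c * Real.exp 1 * (⌈Real.log M⌉ : ℝ) * R ^ 2 / n) →
      ∀ p : ℝ≥0∞, 1 ≤ p →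
        Rad p ≤ Real.sqrt
          (c * Real.exp 1 * (M : ℝ) ^ (1 - 1 / p).toReal * (⌈Real.log M⌉ : ℝ) * R ^ 2 / n) := by
  intro c Rad hRad1 p hp
  clear hRad1
  have hc : c = 23/22 := rfl
  have hM1 : (1:ℝ) < M := by exact_mod_cast hM
  have hM0 : (0:ℝ) < M := by linarith
  have hlog : 0 < Real.log M := Real.log_pos hM1
  have hceil : (0:ℤ) < ⌈Real.log M⌉ := Int.ceil_pos.2 hlog
  set q : ℕ := (⌈Real.log M⌉).toNat with hqdef
  have hq1 : 1 ≤ q := by omega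
  have hqne : q ≠ 0 := by omega
  have h2qne : 2*q ≠ 0 := by omega
  have hqR : (q:ℝ) = ((⌈Real.log M⌉ : ℤ) : ℝ) := by
    have h := Int.toNat_of_nonneg (le_of_lt hceil)
    rw [hqdef]
    exact_mod_cast congrArg (fun z : ℤ => (z:ℝ)) h
  have hq0R : (0:ℝ) < q := by exact_mod_cast hq1
  have hlogq : Real.log M ≤ (q:ℝ) := by rw [hqR]; exact Int.le_ceil _
  have hMq : (M:ℝ) ^ ((q:ℝ)⁻¹) ≤ Real.exp 1 := by
    rw [Real.rpow_def_of_pos hM0]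
    apply Real.exp_le_exp.2
    calc Real.log M * (q:ℝ)⁻¹ ≤ (q:ℝ) * (q:ℝ)⁻¹ :=
        mul_le_mul_of_nonneg_right hlogq (by positivity)
      _ = 1 := mul_inv_cancel₀ (ne_of_gt hq0R)
  have hn0 : (0:ℝ) < n := by exact_mod_cast hn
  set K : ℝ := (M:ℝ) ^ ((1 - 1/p).toReal) with hK
  have hK0 : (0:ℝ) ≤ K := Real.rpow_nonneg hM0.le _
  -- the θ-sum bound
  have hTheta : ∀ θ : Fin M → ℝ, (∀ m, 0 ≤ θ m) →
      (if p = ∞ then ⨆ m, |θ m| else (∑ m, |θ m| ^ p.toReal) ^ (1 / p.toReal)) ≤ 1 →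
      (∑ m, θ m) ≤ K := by
    intro θ hθ0 hcon
    have habs : (∑ m, θ m) ≤ ∑ m, |θ m| := Finset.sum_le_sum fun m _ => le_abs_self _
    by_cases hpi : p = ∞
    · rw [if_pos hpi] at hcon
      have hKM : K = (M:ℝ) := by rw [hK, hpi]; simp
      rw [hKM]
      calc (∑ m, θ m) ≤ ∑ m, |θ m| := habs
        _ ≤ ∑ _m : Fin M, (1:ℝ) := Finset.sum_le_sum fun m _ =>
            le_trans (le_ciSup (f := fun m => |θ m|) (Set.Finite.bddAbove (Set.finite_range _)) m) hcon
        _ = (M:ℝ) := by simp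
    · rw [if_neg hpi] at hcon
      by_cases hp1 : p = 1
      · have hKM : K = 1 := by rw [hK, hp1]; simp
        rw [hp1] at hcon
        simp only [ENNReal.toReal_one, Real.rpow_one, one_div, inv_one] at hcon
        rw [hKM]
        exact habs.trans hcon
      · have h1lt : (1:ℝ≥0∞) < p := lt_of_le_of_ne hp (Ne.symm hp1)
        have hp1lt : 1 < p.toReal := by
          have h2 := (ENNReal.toReal_lt_toReal (by simp) hpi).2 h1lt
          simpa using h2
        have hconj : (p.toReal).HolderConjugate (Real.conjExponent p.toReal) :=
          Real.HolderConjugate.conjExponent hp1lt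
        have hhold := Real.inner_le_Lp_mul_Lq (s := Finset.univ)
          (fun m => |θ m|) (fun _ => (1:ℝ)) hconj
        simp only [mul_one, abs_abs, abs_one, Real.one_rpow, Finset.sum_const,
          Finset.card_univ, Fintype.card_fin, nsmul_eq_mul] at hhold
        have hKq : ((M:ℝ)) ^ (1/(Real.conjExponent p.toReal)) = K := by
          rw [hK]
          congr 1
          have hple : 1/p ≤ 1 := by
            rw [one_div]
            exact ENNReal.inv_le_one.2 hp
          have e1 : (1 - 1/p).toReal = 1 - (1/p).toReal := by
            rw [ENNReal.toReal_sub_of_le hple (by simp)]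
            simp
          have e2 : (1/p).toReal = 1/p.toReal := by
            rw [ENNReal.toReal_div]
            simp
          rw [e1, e2, one_div, one_div, hconj.one_sub_inv]
        have hsum1 : (∑ m, |θ m| ^ p.toReal) ^ (1/p.toReal) ≤ 1 := hcon
        calc (∑ m, θ m) ≤ ∑ m, |θ m| := habs
          _ ≤ (∑ m, |θ m| ^ p.toReal) ^ (1/p.toReal) *
              ((M:ℝ)) ^ (1/(Real.conjExponent p.toReal)) := by
              calc (∑ m, |θ m|) ≤ _ := hhold
                _ = (∑ m, |θ m| ^ p.toReal) ^ (1/p.toReal) *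
                    ((M:ℝ)) ^ (1/(Real.conjExponent p.toReal)) := by norm_num
          _ ≤ 1 * K := by
              rw [hKq]
              exact mul_le_mul_of_nonneg_right hsum1 hK0
          _ = K := one_mul K
  set Tb : ℝ := c * Real.exp 1 * K * (⌈Real.log M⌉ : ℝ) * R ^ 2 / n with hTb
  show Rad p ≤ Real.sqrt Tb
  have hRadp : Rad p = ∫ xs, (1 / (2 ^ n : ℝ)) * ∑ σ : Fin n → Bool,
      sSup {r : ℝ | ∃ (w : ∀ m, H m) (θ : Fin M → ℝ),
        (∑ m, ‖w m‖ ^ 2) ≤ 1 ∧ (∀ m, 0 ≤ θ m) ∧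
        (if p = ∞ then ⨆ m, |θ m| else (∑ m, |θ m| ^ p.toReal) ^ (1 / p.toReal)) ≤ 1 ∧
        r = (1 / (n : ℝ)) * ∑ i, (if σ i then (1 : ℝ) else -1) *
              ∑ m, Real.sqrt (θ m) * ⟪w m, ψ m (xs i)⟫} ∂μ := rfl
  rw [hRadp]
  set F : (Fin n → X) → ℝ := fun xs => (1 / (2 ^ n : ℝ)) * ∑ σ : Fin n → Bool,
      sSup {r : ℝ | ∃ (w : ∀ m, H m) (θ : Fin M → ℝ),
        (∑ m, ‖w m‖ ^ 2) ≤ 1 ∧ (∀ m, 0 ≤ θ m) ∧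
        (if p = ∞ then ⨆ m, |θ m| else (∑ m, |θ m| ^ p.toReal) ^ (1 / p.toReal)) ≤ 1 ∧
        r = (1 / (n : ℝ)) * ∑ i, (if σ i then (1 : ℝ) else -1) *
              ∑ m, Real.sqrt (θ m) * ⟪w m, ψ m (xs i)⟫} with hF
  have hpt : ∀ xs : Fin n → X, F xs ≤ Real.sqrt Tb := by
    intro xs
    simp only [hF]
    set v : (Fin n → Bool) → ∀ m : Fin M, H m :=
      fun σ m => ∑ i, (if σ i then (1:ℝ) else -1) • ψ m (xs i) with hv
    set Z : (Fin n → Bool) → ℝ :=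
      fun σ => (∑ m, ‖v σ m‖^(2*q)) ^ (((2*q : ℕ):ℝ))⁻¹ with hZ
    have hZ0 : ∀ σ, 0 ≤ Z σ := fun σ =>
      Real.rpow_nonneg (Finset.sum_nonneg fun m _ => pow_nonneg (norm_nonneg _) _) _
    have hZpow : ∀ σ, Z σ ^ (2*q) = ∑ m, ‖v σ m‖^(2*q) := fun σ =>
      Real.rpow_inv_natCast_pow
        (Finset.sum_nonneg fun m _ => pow_nonneg (norm_nonneg _) _) h2qne
    have hvZ : ∀ σ m, ‖v σ m‖ ≤ Z σ := by
      intro σ m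
      have h1 : ‖v σ m‖^(2*q) ≤ ∑ m', ‖v σ m'‖^(2*q) :=
        Finset.single_le_sum (fun m' _ => pow_nonneg (norm_nonneg _) _) (Finset.mem_univ m)
      calc ‖v σ m‖ = (‖v σ m‖^(2*q)) ^ (((2*q:ℕ):ℝ))⁻¹ :=
          (Real.pow_rpow_inv_natCast (norm_nonneg _) h2qne).symm
        _ ≤ Z σ := by
            rw [hZ]
            exact Real.rpow_le_rpow (pow_nonneg (norm_nonneg _) _) h1 (by positivity)
    have hsup : ∀ σ : Fin n → Bool,
        sSup {r : ℝ | ∃ (w : ∀ m, H m) (θ : Fin M → ℝ),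
          (∑ m, ‖w m‖ ^ 2) ≤ 1 ∧ (∀ m, 0 ≤ θ m) ∧
          (if p = ∞ then ⨆ m, |θ m| else (∑ m, |θ m| ^ p.toReal) ^ (1 / p.toReal)) ≤ 1 ∧
          r = (1 / (n : ℝ)) * ∑ i, (if σ i then (1 : ℝ) else -1) *
                ∑ m, Real.sqrt (θ m) * ⟪w m, ψ m (xs i)⟫}
        ≤ (Real.sqrt K / n) * Z σ := by
      intro σ
      apply Real.sSup_le
      · rintro r ⟨w, θ, hw, hθ0, hθp, rfl⟩
        have hθK : (∑ m, θ m) ≤ K := hTheta θ hθ0 hθp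
        have hswap : (∑ i, (if σ i then (1:ℝ) else -1) *
              ∑ m, Real.sqrt (θ m) * ⟪w m, ψ m (xs i)⟫)
            = ∑ m, Real.sqrt (θ m) * ⟪w m, v σ m⟫ := by
          simp only [Finset.mul_sum]
          rw [Finset.sum_comm]
          refine Finset.sum_congr rfl fun m _ => ?_
          simp only [hv]
          rw [inner_sum, Finset.mul_sum]
          refine Finset.sum_congr rfl fun i _ => ?_
          rw [real_inner_smul_right]
          ring
        rw [hswap]
        have hCS : (∑ m, Real.sqrt (θ m) * ‖w m‖) ≤ Real.sqrt K := by
          have h1 : (∑ m, Real.sqrt (θ m) * ‖w m‖)^2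
              ≤ (∑ m, Real.sqrt (θ m)^2) * (∑ m, ‖w m‖^2) :=
            Finset.sum_mul_sq_le_sq_mul_sq _ _ _
          have h2 : (∑ m, Real.sqrt (θ m)^2) = ∑ m, θ m :=
            Finset.sum_congr rfl fun m _ => Real.sq_sqrt (hθ0 m)
          have h3 : (∑ m, Real.sqrt (θ m) * ‖w m‖)^2 ≤ K := by
            rw [h2] at h1
            calc (∑ m, Real.sqrt (θ m) * ‖w m‖)^2
                ≤ (∑ m, θ m) * (∑ m, ‖w m‖^2) := h1
              _ ≤ K * 1 := mul_le_mul hθK hw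
                  (Finset.sum_nonneg fun m _ => sq_nonneg _) hK0
              _ = K := mul_one K
          calc (∑ m, Real.sqrt (θ m) * ‖w m‖)
              ≤ |∑ m, Real.sqrt (θ m) * ‖w m‖| := le_abs_self _
            _ = Real.sqrt ((∑ m, Real.sqrt (θ m) * ‖w m‖)^2) :=
                (Real.sqrt_sq_eq_abs _).symm
            _ ≤ Real.sqrt K := Real.sqrt_le_sqrt h3
        have hb1 : (∑ m, Real.sqrt (θ m) * ⟪w m, v σ m⟫) ≤ Real.sqrt K * Z σ := by
          calc (∑ m, Real.sqrt (θ m) * ⟪w m, v σ m⟫)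
              ≤ ∑ m, Real.sqrt (θ m) * (‖w m‖ * Z σ) := by
                refine Finset.sum_le_sum fun m _ => ?_
                apply mul_le_mul_of_nonneg_left _ (Real.sqrt_nonneg _)
                calc ⟪w m, v σ m⟫ ≤ ‖w m‖ * ‖v σ m‖ := real_inner_le_norm _ _
                  _ ≤ ‖w m‖ * Z σ :=
                    mul_le_mul_of_nonneg_left (hvZ σ m) (norm_nonneg _)
            _ = (∑ m, Real.sqrt (θ m) * ‖w m‖) * Z σ := by
                rw [Finset.sum_mul]
                exact Finset.sum_congr rfl fun m _ => by ring
            _ ≤ Real.sqrt K * Z σ := mul_le_mul_of_nonneg_right hCS (hZ0 σ)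
        calc (1/(n:ℝ)) * (∑ m, Real.sqrt (θ m) * ⟪w m, v σ m⟫)
            ≤ (1/(n:ℝ)) * (Real.sqrt K * Z σ) :=
              mul_le_mul_of_nonneg_left hb1 (by positivity)
          _ = (Real.sqrt K / n) * Z σ := by ring
      · exact mul_nonneg (div_nonneg (Real.sqrt_nonneg _) hn0.le) (hZ0 σ)
    set A : ℝ := (1/(2^n:ℝ)) * ∑ σ, Z σ with hA
    have hA0 : 0 ≤ A := by
      rw [hA]
      exact mul_nonneg (by positivity) (Finset.sum_nonneg fun σ _ => hZ0 σ)
    have hcard : ((Finset.univ : Finset (Fin n → Bool)).card : ℝ) = 2^n := by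
      simp [Finset.card_univ]
    have hps := pow_sum_div_card_le_sum_pow (s := Finset.univ) (f := Z)
      (fun σ _ => hZ0 σ) (2*q-1)
    rw [show 2*q-1+1 = 2*q by omega, hcard] at hps
    have hsum2 : (∑ σ : Fin n → Bool, Z σ^(2*q))
        ≤ (M:ℝ) * ((2:ℝ)^n * ((q:ℝ)^q * ((n:ℝ)*R^2)^q)) := by
      calc ∑ σ : Fin n → Bool, Z σ^(2*q)
          = ∑ σ : Fin n → Bool, ∑ m, ‖v σ m‖^(2*q) :=
            Finset.sum_congr rfl fun σ _ => hZpow σ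
        _ = ∑ m, ∑ σ : Fin n → Bool, ‖v σ m‖^(2*q) := Finset.sum_comm
        _ ≤ ∑ _m : Fin M, (2:ℝ)^n * ((2*q-1)‼:ℝ) * ((n:ℝ)*R^2)^q := by
            refine Finset.sum_le_sum fun m _ => ?_
            calc ∑ σ : Fin n → Bool, ‖v σ m‖^(2*q)
                ≤ (2:ℝ)^n * ((2*q-1)‼:ℝ) * (∑ i, ‖ψ m (xs i)‖^2)^q := by
                  simp only [hv]
                  exact khintchine n q (fun i => ψ m (xs i))
              _ ≤ (2:ℝ)^n * ((2*q-1)‼:ℝ) * ((n:ℝ)*R^2)^q := by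
                  apply mul_le_mul_of_nonneg_left _ (by positivity)
                  apply pow_le_pow_left₀ (Finset.sum_nonneg fun i _ => sq_nonneg _)
                  calc (∑ i, ‖ψ m (xs i)‖^2) ≤ ∑ _i : Fin n, R^2 :=
                      Finset.sum_le_sum fun i _ => hR (xs i) m
                    _ = (n:ℝ)*R^2 := by
                        rw [Finset.sum_const, Finset.card_univ, Fintype.card_fin,
                          nsmul_eq_mul]
        _ = (M:ℝ) * ((2:ℝ)^n * (((2*q-1)‼:ℝ) * ((n:ℝ)*R^2)^q)) := by
            rw [Finset.sum_const, Finset.card_univ, Fintype.card_fin, nsmul_eq_mul]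
            ring
        _ ≤ (M:ℝ) * ((2:ℝ)^n * ((q:ℝ)^q * ((n:ℝ)*R^2)^q)) := by
            apply mul_le_mul_of_nonneg_left _ hM0.le
            apply mul_le_mul_of_nonneg_left _ (by positivity)
            apply mul_le_mul_of_nonneg_right (aux_dfac_le q hq1) (by positivity)
    have h2n : (0:ℝ) < 2^n := by positivity
    have hA2q : A^(2*q) ≤ (M:ℝ) * ((q:ℝ)^q * ((n:ℝ)*R^2)^q) := by
      have hpow : ((2:ℝ)^n)^(2*q-1) * 2^n = ((2:ℝ)^n)^(2*q) := by
        rw [← pow_succ, show 2*q-1+1 = 2*q by omega]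
      have e1 : A^(2*q) = ((∑ σ, Z σ)^(2*q) / ((2:ℝ)^n)^(2*q-1)) / 2^n := by
        rw [hA, mul_pow, div_div, hpow, one_div, inv_pow, inv_mul_eq_div]
      rw [e1]
      calc ((∑ σ, Z σ)^(2*q) / ((2:ℝ)^n)^(2*q-1)) / 2^n
          ≤ (∑ σ : Fin n → Bool, Z σ^(2*q)) / 2^n :=
            (div_le_div_iff_of_pos_right h2n).2 hps
        _ ≤ ((M:ℝ) * ((2:ℝ)^n * ((q:ℝ)^q * ((n:ℝ)*R^2)^q))) / 2^n :=
            (div_le_div_iff_of_pos_right h2n).2 hsum2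
        _ = (M:ℝ) * ((q:ℝ)^q * ((n:ℝ)*R^2)^q) := by
            field_simp
    have hA2 : A^2 ≤ (M:ℝ)^((q:ℝ)⁻¹) * ((q:ℝ) * ((n:ℝ)*R^2)) := by
      apply le_of_pow_le_pow_left₀ hqne (by positivity)
      rw [← pow_mul]
      calc A^(2*q) ≤ (M:ℝ) * ((q:ℝ)^q * ((n:ℝ)*R^2)^q) := hA2q
        _ = ((M:ℝ)^((q:ℝ)⁻¹) * ((q:ℝ) * ((n:ℝ)*R^2)))^q := by
            conv_rhs => rw [mul_pow, Real.rpow_inv_natCast_pow hM0.le hqne, mul_pow]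
    have hSA0 : 0 ≤ Real.sqrt K / n * A :=
      mul_nonneg (div_nonneg (Real.sqrt_nonneg _) hn0.le) hA0
    have hfin : (Real.sqrt K / n * A)^2 ≤ Tb := by
      have e2 : (Real.sqrt K / n * A)^2 = K * A^2 / (n:ℝ)^2 := by
        rw [mul_pow, div_pow, Real.sq_sqrt hK0]
        ring
      rw [e2, hTb]
      have hq2 : (0:ℝ) ≤ K * (q:ℝ) * R^2 / n :=
        div_nonneg (mul_nonneg (mul_nonneg hK0 hq0R.le) (sq_nonneg R)) hn0.le
      calc K * A^2 / (n:ℝ)^2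
          ≤ K * ((M:ℝ)^((q:ℝ)⁻¹) * ((q:ℝ) * ((n:ℝ)*R^2))) / (n:ℝ)^2 :=
            (div_le_div_iff_of_pos_right (by positivity)).2
              (mul_le_mul_of_nonneg_left hA2 hK0)
        _ = (M:ℝ)^((q:ℝ)⁻¹) * (K * (q:ℝ) * R^2 / n) := by
            field_simp
        _ ≤ (c * Real.exp 1) * (K * (q:ℝ) * R^2 / n) := by
            apply mul_le_mul_of_nonneg_right _ hq2
            calc (M:ℝ)^((q:ℝ)⁻¹) ≤ Real.exp 1 := hMq
              _ ≤ c * Real.exp 1 := by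
                  rw [hc]
                  nlinarith [Real.exp_pos 1]
        _ = c * Real.exp 1 * K * (⌈Real.log M⌉ : ℝ) * R ^ 2 / n := by
            rw [← hqR]
            ring
    calc (1/(2^n:ℝ)) * (∑ σ : Fin n → Bool, sSup _)
        ≤ (1/(2^n:ℝ)) * ∑ σ : Fin n → Bool, (Real.sqrt K/n) * Z σ :=
          mul_le_mul_of_nonneg_left (Finset.sum_le_sum fun σ _ => hsup σ) (by positivity)
      _ = (Real.sqrt K/n) * A := by
          rw [hA, ← Finset.mul_sum]
          ring
      _ = Real.sqrt ((Real.sqrt K/n * A)^2) := (Real.sqrt_sq hSA0).symm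
      _ ≤ Real.sqrt Tb := Real.sqrt_le_sqrt hfin
  by_cases hInt : Integrable F μ
  · calc (∫ xs, F xs ∂μ) ≤ ∫ _xs, Real.sqrt Tb ∂μ :=
        integral_mono hInt (integrable_const _) hpt
      _ = Real.sqrt Tb := by simp
  · rw [integral_undef hInt]
    exact Real.sqrt_nonneg _
end

section
/- Block-norm reparametrization of the MKL hypothesis class: for p ∈ [1, ∞], the set { h(x) = Σ_{m=1}^M √θ_m ⟨w_m, ψ_m(x)⟩ : Σ_m ‖w_m‖²_{H_m} ≤ 1, θ ≥ 0, ‖θ‖_p ≤ 1 } equals { h(x) = Σ_{m=1}^M ⟨v_m, ψ_m(x)⟩ : ‖v‖_{2,q} ≤ 1 } where q = 2p/(p+1) and ‖v‖_{2,q} = (Σ_m ‖v_m‖_{H_m}^q)^{1/q}. -/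
open scoped RealInnerProductSpace

/-- Block-norm reparametrization of the MKL hypothesis class: for `p ≥ 1`, the
class `{x ↦ ∑_m √θ_m ⟪w_m, ψ_m(x)⟫ : ∑_m ‖w_m‖² ≤ 1, θ ≥ 0, ‖θ‖_p ≤ 1}` equals
`{x ↦ ∑_m ⟪v_m, ψ_m(x)⟫ : ‖v‖_{2,q} ≤ 1}` with `q = 2p/(p+1)`. -/
theorem mkl_blocknorm_class_eq {X : Type*} (M : ℕ)
    (H : Fin M → Type*) [∀ m, NormedAddCommGroup (H m)] [∀ m, InnerProductSpace ℝ (H m)]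
    (ψ : ∀ m, X → H m) (p : ℝ) (hp : 1 ≤ p) :
    {h : X → ℝ | ∃ (w : ∀ m, H m) (θ : Fin M → ℝ),
        (∑ m, ‖w m‖ ^ 2) ≤ 1 ∧ (∀ m, 0 ≤ θ m) ∧ (∑ m, θ m ^ p) ^ ((1 : ℝ) / p) ≤ 1 ∧
        h = fun x => ∑ m, Real.sqrt (θ m) * ⟪w m, ψ m x⟫} =
      {h : X → ℝ | ∃ v : ∀ m, H m,
        (∑ m, ‖v m‖ ^ (2 * p / (p + 1))) ^ ((p + 1) / (2 * p)) ≤ 1 ∧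
        h = fun x => ∑ m, ⟪v m, ψ m x⟫} := by
  have hp0 : 0 < p := lt_of_lt_of_le one_pos hp
  have hp1 : 0 < p + 1 := by linarith
  have hq0 : 0 < 2 * p / (p + 1) := by positivity
  set q : ℝ := 2 * p / (p + 1) with hqdef
  have hq2 : q / 2 = p / (p + 1) := by rw [hqdef]; field_simp
  ext h
  simp only [Set.mem_setOf_eq]
  constructor
  · rintro ⟨w, θ, hw, hθ0, hθp, rfl⟩
    refine ⟨fun m => Real.sqrt (θ m) • w m, ?_, ?_⟩
    · -- norm bound via Hölder
      have hθsum : (∑ m, θ m ^ p) ≤ 1 := by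
        have hS : 0 ≤ ∑ m, θ m ^ p :=
          Finset.sum_nonneg fun m _ => Real.rpow_nonneg (hθ0 m) p
        by_contra hc
        push_neg at hc
        have h1 : 1 < (∑ m, θ m ^ p) ^ ((1:ℝ)/p) :=
          (Real.one_lt_rpow_iff_of_pos (lt_of_le_of_lt zero_le_one hc)).mpr
            (Or.inl ⟨hc, by positivity⟩)
        linarith
      have hcalc : ∀ m : Fin M,
          ‖Real.sqrt (θ m) • w m‖ ^ q = θ m ^ (q/2) * ((‖w m‖ ^ 2 : ℝ)) ^ (q/2) := by
        intro m
        rw [norm_smul, Real.norm_eq_abs, abs_of_nonneg (Real.sqrt_nonneg _),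
          Real.mul_rpow (Real.sqrt_nonneg _) (norm_nonneg _),
          Real.sqrt_eq_rpow, ← Real.rpow_mul (hθ0 m), one_div,
          inv_mul_eq_div, ← Real.rpow_natCast (‖w m‖) 2,
          ← Real.rpow_mul (norm_nonneg _)]
        push_cast
        rw [show (2:ℝ) * (q/2) = q by rw [hqdef]; ring]
      have hconj : Real.HolderConjugate (p + 1) ((p + 1) / p) := by
        rw [Real.holderConjugate_iff_eq_conjExponent (by linarith)]
        ring
      have holder := Real.inner_le_Lp_mul_Lq_of_nonneg (s := Finset.univ)
        (f := fun m => θ m ^ (q/2)) (g := fun m => ((‖w m‖ ^ 2 : ℝ)) ^ (q/2)) hconj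
        (fun m _ => Real.rpow_nonneg (hθ0 m) _)
        (fun m _ => Real.rpow_nonneg (by positivity) _)
      have hfp : ∀ m : Fin M, (θ m ^ (q/2)) ^ (p + 1) = θ m ^ p := by
        intro m
        rw [← Real.rpow_mul (hθ0 m), hq2]
        congr 1
        field_simp
      have hgq : ∀ m : Fin M, (((‖w m‖ ^ 2 : ℝ)) ^ (q/2)) ^ ((p + 1) / p)
          = (‖w m‖ ^ 2 : ℝ) := by
        intro m
        rw [← Real.rpow_mul (by positivity), hq2]
        rw [show p / (p + 1) * ((p + 1) / p) = 1 by field_simp]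
        exact Real.rpow_one _
      have key : (∑ m, ‖Real.sqrt (θ m) • w m‖ ^ q) ≤ 1 := by
        calc (∑ m, ‖Real.sqrt (θ m) • w m‖ ^ q)
            = ∑ m, θ m ^ (q/2) * ((‖w m‖ ^ 2 : ℝ)) ^ (q/2) := by
              exact Finset.sum_congr rfl fun m _ => hcalc m
          _ ≤ (∑ m, (θ m ^ (q/2)) ^ (p+1)) ^ (1/(p+1))
              * (∑ m, (((‖w m‖ ^ 2 : ℝ)) ^ (q/2)) ^ ((p+1)/p)) ^ (1/((p+1)/p)) := holder
          _ = (∑ m, θ m ^ p) ^ (1/(p+1)) * (∑ m, (‖w m‖ ^ 2 : ℝ)) ^ (1/((p+1)/p)) := by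
              rw [Finset.sum_congr rfl fun m _ => hfp m,
                Finset.sum_congr rfl fun m _ => hgq m]
          _ ≤ 1 ^ (1/(p+1)) * 1 ^ (1/((p+1)/p)) := by
              apply mul_le_mul
              · exact Real.rpow_le_rpow
                  (Finset.sum_nonneg fun m _ => Real.rpow_nonneg (hθ0 m) p) hθsum
                  (by positivity)
              · exact Real.rpow_le_rpow
                  (Finset.sum_nonneg fun m _ => by positivity) hw (by positivity)
              · exact Real.rpow_nonneg
                  (Finset.sum_nonneg fun m _ => by positivity) _
              · positivity
          _ = 1 := by rw [Real.one_rpow, Real.one_rpow, mul_one]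
      calc (∑ m, ‖Real.sqrt (θ m) • w m‖ ^ q) ^ ((p+1)/(2*p))
          ≤ 1 ^ ((p+1)/(2*p)) := by
            apply Real.rpow_le_rpow _ key (by positivity)
            exact Finset.sum_nonneg fun m _ => Real.rpow_nonneg (norm_nonneg _) _
        _ = 1 := Real.one_rpow _
    · funext x
      refine Finset.sum_congr rfl fun m _ => ?_
      rw [real_inner_smul_left]
  · rintro ⟨v, hv, rfl⟩
    have hT0 : 0 ≤ ∑ m, ‖v m‖ ^ q :=
      Finset.sum_nonneg fun m _ => Real.rpow_nonneg (norm_nonneg _) _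
    have hT1 : (∑ m, ‖v m‖ ^ q) ≤ 1 := by
      by_contra hc
      push_neg at hc
      have h1 : 1 < (∑ m, ‖v m‖ ^ q) ^ ((p+1)/(2*p)) :=
        (Real.one_lt_rpow_iff_of_pos (lt_of_le_of_lt zero_le_one hc)).mpr
          (Or.inl ⟨hc, by positivity⟩)
      linarith
    refine ⟨fun m => (‖v m‖ ^ (-(q/(2*p)))) • v m, fun m => ‖v m‖ ^ (q/p), ?_, ?_, ?_, ?_⟩
    · -- sum of squared norms
      have : ∀ m : Fin M, ‖(‖v m‖ ^ (-(q/(2*p)))) • v m‖ ^ 2 = ‖v m‖ ^ q := by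
        intro m
        rcases eq_or_ne (v m) 0 with hm | hm
        · simp [hm, Real.zero_rpow (ne_of_gt hq0)]
        · have hvm : (0:ℝ) < ‖v m‖ := norm_pos_iff.mpr hm
          rw [norm_smul, Real.norm_eq_abs,
            abs_of_nonneg (Real.rpow_nonneg (norm_nonneg _) _)]
          rw [mul_pow, ← Real.rpow_natCast (‖v m‖ ^ (-(q/(2*p)))) 2,
            ← Real.rpow_natCast (‖v m‖) 2,
            ← Real.rpow_mul (norm_nonneg _), ← Real.rpow_add hvm]
          congr 1
          push_cast
          rw [hqdef]
          field_simp
          ring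
      rw [Finset.sum_congr rfl fun m _ => this m]
      exact hT1
    · intro m; exact Real.rpow_nonneg (norm_nonneg _) _
    · -- Lp bound on θ
      have hθp : ∀ m : Fin M, (‖v m‖ ^ (q/p)) ^ p = ‖v m‖ ^ q := by
        intro m
        rw [← Real.rpow_mul (norm_nonneg _), div_mul_cancel₀ _ (ne_of_gt hp0)]
      rw [Finset.sum_congr rfl fun m _ => hθp m]
      exact Real.rpow_le_one hT0 hT1 (by positivity)
    · funext x
      refine Finset.sum_congr rfl fun m _ => ?_
      rcases eq_or_ne (v m) 0 with hm | hm
      · simp [hm]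
      · have hvm : (0:ℝ) < ‖v m‖ := norm_pos_iff.mpr hm
        simp only [real_inner_smul_left, Real.sqrt_eq_rpow]
        rw [← Real.rpow_mul (norm_nonneg _), ← mul_assoc, ← Real.rpow_add hvm]
        rw [show q/p * (1/2) + -(q/(2*p)) = 0 by ring, Real.rpow_zero, one_mul]
end

section
/- For p > 1 and nonzero a ∈ ℝ^M with a ≥ 0, min over {θ ∈ ℝ^M : θ > 0, ‖θ‖_p ≤ 1} of Σ_{m=1}^M a_m/θ_m equals (Σ_{m=1}^M a_m^{p/(p+1)})^{(p+1)/p}. -/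
open Finset Real

lemma theta_mem_aux (M : ℕ) (p : ℝ) (hp : 1 < p) (a : Fin M → ℝ) (ha : ∀ m, 0 ≤ a m)
    (hM : Nonempty (Fin M)) {δ : ℝ} (hδ : 0 < δ) :
    ∃ r ∈ {r : ℝ | ∃ θ : Fin M → ℝ, (∀ m, 0 < θ m) ∧
        (∑ m, θ m ^ p) ^ ((1 : ℝ) / p) ≤ 1 ∧ r = ∑ m, a m / θ m},
      r ≤ (∑ m, (a m + δ) ^ (p / (p + 1))) ^ ((p + 1) / p) := by
  have hp0 : (0:ℝ) < p := lt_trans one_pos hp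
  have hp1 : (0:ℝ) < p + 1 := by linarith
  set c : ℝ := p / (p + 1) with hc
  have hb : ∀ m, 0 < a m + δ := fun m => by have := ha m; linarith
  set T : ℝ := ∑ m, (a m + δ) ^ c with hT
  have hTpos : 0 < T := Finset.sum_pos (fun m _ => Real.rpow_pos_of_pos (hb m) c)
    Finset.univ_nonempty
  set θ : Fin M → ℝ := fun m => (a m + δ) ^ ((1:ℝ)/(p+1)) / T ^ ((1:ℝ)/p) with hθ
  have hθpos : ∀ m, 0 < θ m := fun m =>
    div_pos (Real.rpow_pos_of_pos (hb m) _) (Real.rpow_pos_of_pos hTpos _)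
  refine ⟨∑ m, a m / θ m, ⟨θ, hθpos, ?_, rfl⟩, ?_⟩
  · have hsum : ∑ m, θ m ^ p = 1 := by
      have key : ∀ m, θ m ^ p = (a m + δ) ^ c / T := by
        intro m
        rw [hθ]
        rw [Real.div_rpow (Real.rpow_nonneg (hb m).le _) (Real.rpow_nonneg hTpos.le _),
          ← Real.rpow_mul (hb m).le, ← Real.rpow_mul hTpos.le, one_div_mul_eq_div,
          one_div_mul_eq_div, div_self (ne_of_gt hp0), Real.rpow_one]
      rw [Finset.sum_congr rfl (fun m _ => key m), ← Finset.sum_div, ← hT,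
        div_self (ne_of_gt hTpos)]
    rw [hsum, Real.one_rpow]
  · have hstep : ∀ m, a m / θ m ≤ (a m + δ) ^ c * T ^ ((1:ℝ)/p) := by
      intro m
      have h1 : a m / θ m ≤ (a m + δ) / θ m := by
        exact (div_le_div_iff_of_pos_right (hθpos m)).mpr (by linarith)
      have h2 : (a m + δ) / θ m = (a m + δ) ^ c * T ^ ((1:ℝ)/p) := by
        have hcc : c = 1 - (1:ℝ)/(p+1) := by rw [hc]; field_simp; ring
        rw [hcc, Real.rpow_sub (hb m), Real.rpow_one, hθ, div_div_eq_mul_div]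
        ring
      rw [← h2]; exact h1
    calc ∑ m, a m / θ m ≤ ∑ m, (a m + δ) ^ c * T ^ ((1:ℝ)/p) :=
          Finset.sum_le_sum (fun m _ => hstep m)
      _ = T * T ^ ((1:ℝ)/p) := by rw [← Finset.sum_mul, ← hT]
      _ = T ^ ((p+1)/p) := by
          have : (p+1)/p = 1 + 1/p := by field_simp
          rw [this, Real.rpow_add hTpos, Real.rpow_one]

/-- Key identity for the analytic θ-update: for `p > 1` and nonzero `a ≥ 0` in
`ℝ^M`, the infimum of `∑_m a_m/θ_m` over `{θ : θ > 0, ‖θ‖_p ≤ 1}` equals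
`(∑_m a_m^{p/(p+1)})^{(p+1)/p}`. -/
theorem min_sum_div_pnorm_ball (M : ℕ) (p : ℝ) (hp : 1 < p)
    (a : Fin M → ℝ) (ha : ∀ m, 0 ≤ a m) (ha0 : a ≠ 0) :
    sInf {r : ℝ | ∃ θ : Fin M → ℝ, (∀ m, 0 < θ m) ∧
        (∑ m, θ m ^ p) ^ ((1 : ℝ) / p) ≤ 1 ∧ r = ∑ m, a m / θ m} =
      (∑ m, a m ^ (p / (p + 1))) ^ ((p + 1) / p) := by
  have hp0 : (0:ℝ) < p := lt_trans one_pos hp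
  have hp1 : (0:ℝ) < p + 1 := by linarith
  set c : ℝ := p / (p + 1) with hc
  have hcpos : 0 < c := div_pos hp0 hp1
  obtain ⟨m0, hm0⟩ : ∃ m, a m ≠ 0 := Function.ne_iff.mp ha0
  have hM : Nonempty (Fin M) := ⟨m0⟩
  set S : ℝ := ∑ m, a m ^ c with hS
  have hSpos : 0 < S := by
    apply Finset.sum_pos' (fun m _ => Real.rpow_nonneg (ha m) c)
    exact ⟨m0, Finset.mem_univ m0,
      Real.rpow_pos_of_pos (lt_of_le_of_ne (ha m0) (Ne.symm hm0)) c⟩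
  set V : ℝ := S ^ ((p+1)/p) with hV
  set E : Set ℝ := {r : ℝ | ∃ θ : Fin M → ℝ, (∀ m, 0 < θ m) ∧
        (∑ m, θ m ^ p) ^ ((1 : ℝ) / p) ≤ 1 ∧ r = ∑ m, a m / θ m} with hE
  -- lower bound
  have hlb : ∀ r ∈ E, V ≤ r := by
    rintro r ⟨θ, hθpos, hθnorm, rfl⟩
    have hθsum : ∑ m, θ m ^ p ≤ 1 := by
      have ht0 : 0 ≤ ∑ m, θ m ^ p :=
        Finset.sum_nonneg fun m _ => (Real.rpow_pos_of_pos (hθpos m) p).le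
      have := Real.rpow_le_rpow (Real.rpow_nonneg ht0 _) hθnorm hp0.le
      rwa [← Real.rpow_mul ht0, one_div_mul_cancel (ne_of_gt hp0), Real.rpow_one,
        Real.one_rpow] at this
    have hconj : Real.HolderConjugate ((p+1)/p) (p+1) := by
      constructor
      · rw [inv_div, inv_one, ← one_div, ← add_div, div_self (ne_of_gt hp1)]
      · exact div_pos hp1 hp0
      · exact hp1
    have holder := Real.inner_le_Lp_mul_Lq_of_nonneg (s := Finset.univ)
      (f := fun m => (a m / θ m) ^ c) (g := fun m => θ m ^ c) hconj
      (fun m _ => Real.rpow_nonneg (div_nonneg (ha m) (hθpos m).le) c)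
      (fun m _ => Real.rpow_nonneg (hθpos m).le c)
    have hfg : ∀ m : Fin M, (a m / θ m) ^ c * θ m ^ c = a m ^ c := by
      intro m
      rw [← Real.mul_rpow (div_nonneg (ha m) (hθpos m).le) (hθpos m).le,
        div_mul_cancel₀ _ (ne_of_gt (hθpos m))]
    have hf : ∀ m : Fin M, ((a m / θ m) ^ c) ^ ((p+1)/p) = a m / θ m := by
      intro m
      rw [← Real.rpow_mul (div_nonneg (ha m) (hθpos m).le), hc]
      rw [div_mul_div_comm]
      rw [mul_comm (p+1) p]  -- p*(p+1) / ((p+1)*p)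
      rw [div_self (by positivity), Real.rpow_one]
    have hg : ∀ m : Fin M, (θ m ^ c) ^ (p+1) = θ m ^ p := by
      intro m
      rw [← Real.rpow_mul (hθpos m).le, hc, div_mul_cancel₀ _ (ne_of_gt hp1)]
    rw [Finset.sum_congr rfl (fun m _ => hfg m),
      Finset.sum_congr rfl (fun m _ => hf m),
      Finset.sum_congr rfl (fun m _ => hg m)] at holder
    have hr0 : 0 ≤ ∑ m, a m / θ m :=
      Finset.sum_nonneg fun m _ => div_nonneg (ha m) (hθpos m).le
    have h2 : S ≤ (∑ m, a m / θ m) ^ (1 / ((p+1)/p)) := by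
      refine le_trans holder ?_
      have h3 : (∑ m, θ m ^ p) ^ (1/(p+1)) ≤ 1 :=
        Real.rpow_le_one (Finset.sum_nonneg fun m _ =>
          (Real.rpow_pos_of_pos (hθpos m) p).le) hθsum (by positivity)
      calc (∑ m, a m / θ m) ^ (1/((p+1)/p)) * (∑ m, θ m ^ p) ^ (1/(p+1))
          ≤ (∑ m, a m / θ m) ^ (1/((p+1)/p)) * 1 := by
            exact mul_le_mul_of_nonneg_left h3 (Real.rpow_nonneg hr0 _)
        _ = (∑ m, a m / θ m) ^ (1/((p+1)/p)) := mul_one _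
    have h4 := Real.rpow_le_rpow hSpos.le h2 (by positivity : (0:ℝ) ≤ (p+1)/p)
    rwa [← Real.rpow_mul hr0, one_div_div, div_mul_div_comm, mul_comm p (p+1),
      div_self (by positivity), Real.rpow_one] at h4
  have hbdd : BddBelow E := ⟨V, hlb⟩
  have hne : E.Nonempty := by
    obtain ⟨r, hr, -⟩ := theta_mem_aux M p hp a ha hM one_pos
    exact ⟨r, hr⟩
  refine le_antisymm ?_ (le_csInf hne hlb)
  -- upper bound
  refine le_of_forall_pos_le_add ?_
  intro ε hε
  -- continuity: choose δ
  have hcont : ContinuousAt (fun δ : ℝ => (∑ m, (a m + δ) ^ c) ^ ((p+1)/p)) 0 := by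
    apply ContinuousAt.rpow_const
    · exact tendsto_finset_sum _ fun m _ =>
        ((continuous_const.add continuous_id).continuousAt).rpow_const (Or.inr hcpos.le)
    · right; positivity
  have htd := hcont.tendsto
  simp only [add_zero] at htd
  rw [← hS, ← hV] at htd
  have hev : ∀ᶠ δ in nhds (0:ℝ),
      (∑ m, (a m + δ) ^ c) ^ ((p+1)/p) < V + ε :=
    htd (Iio_mem_nhds (by linarith))
  obtain ⟨δ, hδlt, hδmem⟩ := ((hev.filter_mono (nhdsWithin_le_nhds (s := Set.Ioi (0:ℝ)))).and
    (eventually_mem_nhdsWithin)).exists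
  obtain ⟨r, hr, hrle⟩ := theta_mem_aux M p hp a ha hM hδmem
  calc sInf E ≤ r := csInf_le hbdd hr
    _ ≤ (∑ m, (a m + δ) ^ c) ^ ((p+1)/p) := hrle
    _ ≤ V + ε := hδlt.le
end

section
/- The dual of the ℓ1-regularized MKL with hinge loss is the QCQP: sup_{α,ξ} 1ᵀα − ξ subject to (1/2)αᵀ Y K_m Y α ≤ ξ for all m = 1,…,M, yᵀα = 0, 0 ≤ α ≤ C·1. Equivalently, it equals sup over feasible α of 1ᵀα − (1/2) max_{m} αᵀ Y K_m Y α. -/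
open scoped ENNReal RealInnerProductSpace
open Matrix

section helpers
variable {G : Type*} [NormedAddCommGroup G] [InnerProductSpace ℝ G]

lemma persp (a b : G) {s t : ℝ} (hs : 0 < s) (ht : 0 < t) :
    ‖a + b‖ ^ 2 / (s + t) ≤ ‖a‖ ^ 2 / s + ‖b‖ ^ 2 / t := by
  rw [div_add_div _ _ (ne_of_gt hs) (ne_of_gt ht), div_le_div_iff₀ (by positivity) (by positivity)]
  have h1 : ‖a + b‖ ≤ ‖a‖ + ‖b‖ := norm_add_le a b
  have h2 : ‖a + b‖ ^ 2 ≤ (‖a‖ + ‖b‖) ^ 2 := by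
    apply pow_le_pow_left₀ (norm_nonneg _) h1
  nlinarith [sq_nonneg (‖a‖ * t - ‖b‖ * s), norm_nonneg a, norm_nonneg b,
    mul_le_mul_of_nonneg_right h2 (mul_pos hs ht).le, mul_pos hs ht]

lemma lin_lower {a c d : ℝ} (h : ∀ t : ℝ, 0 ≤ t → d ≤ c + a * t) : 0 ≤ a := by
  by_contra hneg
  push_neg at hneg
  have h0 := h 0 le_rfl
  have ht : (0:ℝ) ≤ (c - d + 1) / (-a) := by
    apply div_nonneg (by linarith) (by linarith)
  have := h _ ht
  have ha0 : a ≠ 0 := ne_of_lt hneg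
  have ha : a * ((c - d + 1) / (-a)) = -(c - d + 1) := by
    field_simp
  rw [ha] at this
  linarith

lemma lin_upper {a e : ℝ} (h : ∀ t : ℝ, 0 ≤ t → a * t ≤ e) : a ≤ 0 := by
  have : 0 ≤ -a := lin_lower (a := -a) (c := e) (d := 0) (fun t ht => by
    have := h t ht; linarith)
  linarith

lemma eps_le {X Y : ℝ} (h : ∀ ε : ℝ, 0 < ε → X ≤ Y + ε) : X ≤ Y := by
  by_contra hc
  push_neg at hc
  have := h ((X - Y) / 2) (by linarith)
  linarith

lemma sigma_le {X Y K : ℝ} (hK : 0 ≤ K) (h : ∀ σ : ℝ, 0 < σ → σ < 1 → X ≤ Y + σ * K) : X ≤ Y := by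
  apply eps_le
  intro ε hε
  rcases eq_or_lt_of_le hK with hK0 | hK0
  · have := h (1/2) (by norm_num) (by norm_num)
    rw [← hK0] at this
    linarith
  · have hσpos : 0 < min (1/2) (ε / (2 * K)) := by positivity
    have hσlt : min (1/2) (ε / (2 * K)) < 1 := lt_of_le_of_lt (min_le_left _ _) (by norm_num)
    have := h _ hσpos hσlt
    have h2 : min (1/2) (ε / (2 * K)) * K ≤ (ε / (2 * K)) * K := by
      apply mul_le_mul_of_nonneg_right (min_le_right _ _) hK
    have h3 : (ε / (2 * K)) * K = ε / 2 := by field_simp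
    linarith

end helpers


section MKL2
variable {n M : ℕ} {H : Fin M → Type*} [∀ m, NormedAddCommGroup (H m)]
  [∀ m, InnerProductSpace ℝ (H m)]
  (v : ∀ m, Fin n → H m) (y : Fin n → ℝ) (C : ℝ)

def qm' (v : ∀ m, Fin n → H m) (y : Fin n → ℝ) (m : Fin M) (α : Fin n → ℝ) : ℝ :=
  (fun i => y i * α i) ⬝ᵥ ((Matrix.of fun i j => ⟪v m i, v m j⟫) *ᵥ fun i => y i * α i)

def FeasSet (y : Fin n → ℝ) (C : ℝ) (α : Fin n → ℝ) : Prop :=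
  (∑ i, y i * α i) = 0 ∧ ∀ i, 0 ≤ α i ∧ α i ≤ C

def Dset1 : Set ℝ :=
  {r | ∃ (α : Fin n → ℝ) (ξ : ℝ), FeasSet y C α ∧
    (∀ m, (1 / 2) * qm' v y m α ≤ ξ) ∧ r = (∑ i, α i) - ξ}

def Dset2 : Set ℝ :=
  {r | ∃ α : Fin n → ℝ, FeasSet y C α ∧
    r = (∑ i, α i) - (1 / 2) * ⨆ m, qm' v y m α}

def SrealSet : Set ℝ :=
  {r | ∃ (w : ∀ m, H m) (b : ℝ) (θ : Fin M → ℝ) (ζ : Fin n → ℝ),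
    (∀ m, 0 < θ m) ∧ (∑ m, θ m) ≤ 1 ∧ (∀ i, 0 ≤ ζ i) ∧
    (∀ i, 1 - y i * ((∑ m, ⟪w m, v m i⟫) + b) ≤ ζ i) ∧
    r = C * ∑ i, ζ i + ∑ m, ‖w m‖ ^ 2 / (2 * θ m)}

end MKL2

section MKL3
variable {n M : ℕ} {H : Fin M → Type*} [∀ m, NormedAddCommGroup (H m)]
  [∀ m, InnerProductSpace ℝ (H m)]
  (v : ∀ m, Fin n → H m) (y : Fin n → ℝ) (C : ℝ)

lemma qm'_eq (m : Fin M) (α : Fin n → ℝ) :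
    qm' v y m α = ‖∑ i, (y i * α i) • v m i‖ ^ 2 := by
  simp only [qm', ← real_inner_self_eq_norm_sq, sum_inner, inner_sum,
    real_inner_smul_left, real_inner_smul_right, Matrix.mulVec, dotProduct,
    Matrix.of_apply]
  apply Finset.sum_congr rfl
  intro i _
  rw [Finset.mul_sum]
  apply Finset.sum_congr rfl
  intro j _
  rw [real_inner_comm (v m j) (v m i)]
  ring

lemma qm'_nonneg (m : Fin M) (α : Fin n → ℝ) : 0 ≤ qm' v y m α := by
  rw [qm'_eq]; positivity

lemma qm'_bdd (α : Fin n → ℝ) : BddAbove (Set.range fun m => qm' v y m α) :=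
  (Set.finite_range _).bddAbove

lemma le_sup_qm (m : Fin M) (α : Fin n → ℝ) :
    qm' v y m α ≤ ⨆ m', qm' v y m' α :=
  le_ciSup (qm'_bdd v y α) m

lemma sup_qm_nonneg (hM : 0 < M) (α : Fin n → ℝ) :
    0 ≤ ⨆ m, qm' v y m α :=
  le_trans (qm'_nonneg v y ⟨0, hM⟩ α) (le_sup_qm v y ⟨0, hM⟩ α)

lemma sup_qm_le (hM : 0 < M) {α : Fin n → ℝ} {ξ : ℝ} (h : ∀ m, qm' v y m α ≤ ξ) :
    (⨆ m, qm' v y m α) ≤ ξ := by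
  haveI : Nonempty (Fin M) := ⟨⟨0, hM⟩⟩
  exact ciSup_le h

lemma weak (hM : 0 < M) {s d : ℝ} (hs : s ∈ SrealSet v y C) (hd : d ∈ Dset2 v y C) :
    d ≤ s := by
  obtain ⟨w, b, θ, ζ, hθ, hθ1, hζ, hg, rfl⟩ := hs
  obtain ⟨α, ⟨hay, hab⟩, rfl⟩ := hd
  set S := ⨆ m, qm' v y m α with hS
  set U : ∀ m, H m := fun m => ∑ i, (y i * α i) • v m i with hU
  -- step 1: ∑ α ≤ ∑ α y f + b * ∑ y α + ∑ α ζ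
  have h1 : ∀ i, α i ≤ α i * (y i * ((∑ m, ⟪w m, v m i⟫) + b)) + α i * ζ i := by
    intro i
    nlinarith [mul_le_mul_of_nonneg_left (hg i) (hab i).1]
  have hsum1 : ∑ i, α i ≤ (∑ i, α i * (y i * ((∑ m, ⟪w m, v m i⟫) + b))) + ∑ i, α i * ζ i := by
    rw [← Finset.sum_add_distrib]
    exact Finset.sum_le_sum fun i _ => h1 i
  -- step 2 : split off b
  have h2 : ∑ i, α i * (y i * ((∑ m, ⟪w m, v m i⟫) + b))
      = (∑ i, α i * (y i * (∑ m, ⟪w m, v m i⟫))) + b * ∑ i, y i * α i := by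
    rw [Finset.mul_sum, ← Finset.sum_add_distrib]
    apply Finset.sum_congr rfl
    intro i _
    ring
  -- step 3 : inner product identity
  have h3 : ∑ i, α i * (y i * (∑ m, ⟪w m, v m i⟫)) = ∑ m, ⟪w m, U m⟫ := by
    have : ∀ i, α i * (y i * (∑ m, ⟪w m, v m i⟫)) = ∑ m, ⟪w m, (y i * α i) • v m i⟫ := by
      intro i
      rw [Finset.mul_sum, Finset.mul_sum]
      apply Finset.sum_congr rfl
      intro m _
      rw [real_inner_smul_right]
      ring
    rw [Finset.sum_congr rfl fun i _ => this i, Finset.sum_comm]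
    apply Finset.sum_congr rfl
    intro m _
    rw [← inner_sum]
  -- step 4 : AM-GM per m
  have h4 : ∀ m, ⟪w m, U m⟫ ≤ ‖w m‖ ^ 2 / (2 * θ m) + θ m * ‖U m‖ ^ 2 / 2 := by
    intro m
    have h0 : 0 < θ m := hθ m
    have hc : ⟪w m, U m⟫ ≤ ‖w m‖ * ‖U m‖ := real_inner_le_norm _ _
    have key : ⟪w m, U m⟫ * (2 * θ m) ≤ ‖w m‖ ^ 2 + θ m ^ 2 * ‖U m‖ ^ 2 := by
      nlinarith [sq_nonneg (‖w m‖ - θ m * ‖U m‖),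
        mul_le_mul_of_nonneg_right hc (by positivity : (0:ℝ) ≤ 2 * θ m)]
    have heq : ‖w m‖ ^ 2 / (2 * θ m) + θ m * ‖U m‖ ^ 2 / 2
        = (‖w m‖ ^ 2 + θ m ^ 2 * ‖U m‖ ^ 2) / (2 * θ m) := by
      field_simp
    rw [heq, le_div_iff₀ (by positivity)]
    exact key
  have hsum4 : ∑ m, ⟪w m, U m⟫ ≤ (∑ m, ‖w m‖ ^ 2 / (2 * θ m)) + (∑ m, θ m * ‖U m‖ ^ 2) / 2 := by
    rw [Finset.sum_div, ← Finset.sum_add_distrib]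
    exact Finset.sum_le_sum fun m _ => h4 m
  -- step 5 : ∑ θ Q ≤ S
  have h5 : ∑ m, θ m * ‖U m‖ ^ 2 ≤ S := by
    calc ∑ m, θ m * ‖U m‖ ^ 2 = ∑ m, θ m * qm' v y m α := by
          apply Finset.sum_congr rfl; intro m _; rw [qm'_eq]
      _ ≤ ∑ m, θ m * S := Finset.sum_le_sum fun m _ =>
          mul_le_mul_of_nonneg_left (le_sup_qm v y m α) (hθ m).le
      _ = (∑ m, θ m) * S := by rw [Finset.sum_mul]
      _ ≤ 1 * S := mul_le_mul_of_nonneg_right hθ1 (sup_qm_nonneg v y hM α)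
      _ = S := one_mul S
  -- step 6 : ∑ α ζ ≤ C ∑ ζ
  have h6 : ∑ i, α i * ζ i ≤ C * ∑ i, ζ i := by
    rw [Finset.mul_sum]
    exact Finset.sum_le_sum fun i _ => mul_le_mul_of_nonneg_right (hab i).2 (hζ i)
  rw [hay] at h2
  linarith
end MKL3

section MKL4
variable {n M : ℕ} {H : Fin M → Type*} [∀ m, NormedAddCommGroup (H m)]
  [∀ m, InnerProductSpace ℝ (H m)]
  (v : ∀ m, Fin n → H m) (y : Fin n → ℝ) (C : ℝ)

lemma sup_qm_zero (hM : 0 < M) : (⨆ m, qm' v y m (0 : Fin n → ℝ)) = 0 := by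
  haveI : Nonempty (Fin M) := ⟨⟨0, hM⟩⟩
  have : ∀ m : Fin M, qm' v y m (0 : Fin n → ℝ) = 0 := by
    intro m
    rw [qm'_eq]
    simp
  simp only [this, ciSup_const]

lemma feas_zero (hC : 0 ≤ C) : FeasSet y C (0 : Fin n → ℝ) := by
  constructor
  · simp
  · intro i; simp [hC]

lemma dset1_nonempty (hM : 0 < M) (hC : 0 ≤ C) : (0:ℝ) ∈ Dset1 v y C := by
  refine ⟨0, 0, feas_zero y C hC, ?_, by simp⟩
  intro m
  have : qm' v y m (0 : Fin n → ℝ) = 0 := by rw [qm'_eq]; simp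
  rw [this]; norm_num

lemma dset2_nonempty (hM : 0 < M) (hC : 0 ≤ C) : (0:ℝ) ∈ Dset2 v y C := by
  refine ⟨0, feas_zero y C hC, ?_⟩
  rw [sup_qm_zero v y hM]
  simp

lemma dset1_bdd (hM : 0 < M) : ∀ r ∈ Dset1 v y C, r ≤ n * C := by
  rintro r ⟨α, ξ, ⟨hay, hab⟩, hξ, rfl⟩
  have h1 : ∑ i, α i ≤ ∑ i : Fin n, C := Finset.sum_le_sum fun i _ => (hab i).2
  have h2 : (0:ℝ) ≤ ξ := le_trans (by positivity) (le_trans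
    (by nlinarith [qm'_nonneg v y ⟨0, hM⟩ α] : (0:ℝ) ≤ (1/2) * qm' v y ⟨0, hM⟩ α) (hξ ⟨0, hM⟩))
  simp only [Finset.sum_const, Finset.card_univ, Fintype.card_fin, nsmul_eq_mul] at h1
  linarith

lemma dset2_sub (hM : 0 < M) : Dset2 v y C ⊆ Dset1 v y C := by
  rintro r ⟨α, hfeas, rfl⟩
  refine ⟨α, (1/2) * ⨆ m, qm' v y m α, hfeas, ?_, rfl⟩
  intro m
  have := le_sup_qm v y m α
  linarith

lemma dset2_bdd (hM : 0 < M) : ∀ r ∈ Dset2 v y C, r ≤ n * C := fun r hr =>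
  dset1_bdd v y C hM r (dset2_sub v y C hM hr)

lemma dual_eq (hM : 0 < M) (hC : 0 ≤ C) : sSup (Dset1 v y C) = sSup (Dset2 v y C) := by
  apply le_antisymm
  · apply csSup_le ⟨0, dset1_nonempty v y C hM hC⟩
    rintro r ⟨α, ξ, hfeas, hξ, rfl⟩
    have hle : (1/2) * (⨆ m, qm' v y m α) ≤ ξ := by
      have h2 : (⨆ m, qm' v y m α) ≤ 2 * ξ := by
        apply sup_qm_le v y hM
        intro m
        have := hξ m
        linarith
      linarith
    have hmem : (∑ i, α i) - (1/2) * (⨆ m, qm' v y m α) ∈ Dset2 v y C := ⟨α, hfeas, rfl⟩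
    have := le_csSup ⟨n * C, by rintro s ⟨t, ht, rfl⟩; exact dset2_bdd v y C hM _ ⟨t, ht, rfl⟩⟩ hmem
    · linarith
  · apply csSup_le_csSup
    · exact ⟨n * C, by intro s hs; exact dset1_bdd v y C hM s hs⟩
    · exact ⟨0, dset2_nonempty v y C hM hC⟩
    · exact dset2_sub v y C hM

lemma sreal_lower (hC : 0 ≤ C) : ∀ r ∈ SrealSet v y C, (0:ℝ) ≤ r := by
  rintro r ⟨w, b, θ, ζ, hθ, hθ1, hζ, hg, rfl⟩
  have h1 : (0:ℝ) ≤ C * ∑ i, ζ i := by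
    apply mul_nonneg hC
    exact Finset.sum_nonneg fun i _ => hζ i
  have h2 : (0:ℝ) ≤ ∑ m, ‖w m‖ ^ 2 / (2 * θ m) := by
    apply Finset.sum_nonneg
    intro m _
    have := hθ m
    positivity
  linarith

lemma sreal_nonempty (hM : 0 < M) : (C * n) ∈ SrealSet v y C := by
  refine ⟨fun m => 0, 0, fun m => (M:ℝ)⁻¹, fun i => 1, ?_, ?_, ?_, ?_, ?_⟩
  · intro m
    have : (0:ℝ) < M := by exact_mod_cast hM
    positivity
  · rw [Finset.sum_const, Finset.card_univ, Fintype.card_fin, nsmul_eq_mul]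
    rw [mul_inv_cancel₀ (by exact_mod_cast hM.ne' : (M:ℝ) ≠ 0)]
  · intro i; norm_num
  · intro i; simp
  · simp
end MKL4

section MKL5
variable {n M : ℕ} {H : Fin M → Type*} [∀ m, NormedAddCommGroup (H m)]
  [∀ m, InnerProductSpace ℝ (H m)]
  (v : ∀ m, Fin n → H m) (y : Fin n → ℝ) (C : ℝ)

lemma ennpart_eq {w : ∀ m, H m} {θ : Fin M → ℝ} (hθ0 : ∀ m, 0 ≤ θ m)
    (hz : ∀ m, θ m = 0 → w m = 0) :
    (((∑ m, ENNReal.ofReal (‖w m‖ ^ 2) / ENNReal.ofReal (θ m)) / 2 : ℝ≥0∞) : EReal)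
      = ((∑ m, ‖w m‖ ^ 2 / (2 * θ m) : ℝ) : EReal) := by
  have hterm : ∀ m : Fin M, ENNReal.ofReal (‖w m‖ ^ 2) / ENNReal.ofReal (θ m)
      = ENNReal.ofReal (‖w m‖ ^ 2 / θ m) := by
    intro m
    rcases eq_or_lt_of_le (hθ0 m) with h | h
    · rw [hz m h.symm]
      simp
    · exact (ENNReal.ofReal_div_of_pos h).symm
  have hS : (0:ℝ) ≤ ∑ m, ‖w m‖ ^ 2 / θ m :=
    Finset.sum_nonneg fun m _ => div_nonneg (sq_nonneg _) (hθ0 m)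
  have h1 : (∑ m, ENNReal.ofReal (‖w m‖ ^ 2) / ENNReal.ofReal (θ m))
      = ENNReal.ofReal (∑ m, ‖w m‖ ^ 2 / θ m) := by
    rw [ENNReal.ofReal_sum_of_nonneg fun m _ => div_nonneg (sq_nonneg _) (hθ0 m)]
    exact Finset.sum_congr rfl fun m _ => hterm m
  rw [h1]
  have h2 : ENNReal.ofReal (∑ m, ‖w m‖ ^ 2 / θ m) / 2
      = ENNReal.ofReal ((∑ m, ‖w m‖ ^ 2 / θ m) / 2) := by
    rw [ENNReal.ofReal_div_of_pos (by norm_num : (0:ℝ) < 2)]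
    norm_num
  rw [h2, EReal.coe_ennreal_ofReal, max_eq_left (by positivity)]
  congr 1
  rw [Finset.sum_div]
  apply Finset.sum_congr rfl
  intro m _
  rw [div_div]
  ring_nf

lemma bridge (hM : 0 < M) (hC : 0 < C) :
    sInf {r : EReal | ∃ (w : ∀ m, H m) (b : ℝ) (θ : Fin M → ℝ),
        (∀ m, 0 ≤ θ m) ∧ (∑ m, θ m) ≤ 1 ∧
        r = ((C * ∑ i, max 0 (1 - y i * ((∑ m, ⟪w m, v m i⟫) + b)) : ℝ) : EReal) +
            (((∑ m, ENNReal.ofReal (‖w m‖ ^ 2) / ENNReal.ofReal (θ m)) / 2 : ℝ≥0∞) : EReal)}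
    = ((sInf (SrealSet v y C) : ℝ) : EReal) := by
  set p : ℝ := sInf (SrealSet v y C) with hp
  apply le_antisymm
  · -- sInf SE ≤ p
    by_contra hcon
    push_neg at hcon
    obtain ⟨c, hc1, hc2⟩ := EReal.exists_between_coe_real hcon
    have hpc : p < c := by exact_mod_cast hc1
    obtain ⟨s, hsmem, hsc⟩ := exists_lt_of_csInf_lt ⟨C * n, sreal_nonempty v y C hM⟩ hpc
    obtain ⟨w, b, θ, ζ, hθ, hθ1, hζ, hg, rfl⟩ := hsmem
    set hinge : ℝ := C * ∑ i, max 0 (1 - y i * ((∑ m, ⟪w m, v m i⟫) + b)) with hhinge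
    have hmem : ((hinge : ℝ) : EReal) +
        (((∑ m, ENNReal.ofReal (‖w m‖ ^ 2) / ENNReal.ofReal (θ m)) / 2 : ℝ≥0∞) : EReal)
        ∈ {r : EReal | ∃ (w : ∀ m, H m) (b : ℝ) (θ : Fin M → ℝ),
        (∀ m, 0 ≤ θ m) ∧ (∑ m, θ m) ≤ 1 ∧
        r = ((C * ∑ i, max 0 (1 - y i * ((∑ m, ⟪w m, v m i⟫) + b)) : ℝ) : EReal) +
            (((∑ m, ENNReal.ofReal (‖w m‖ ^ 2) / ENNReal.ofReal (θ m)) / 2 : ℝ≥0∞) : EReal)} :=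
      ⟨w, b, θ, fun m => (hθ m).le, hθ1, rfl⟩
    have hle := sInf_le hmem
    have heq := ennpart_eq (w := w) (θ := θ) (fun m => (hθ m).le)
      (fun m hm => absurd hm (ne_of_gt (hθ m)))
    rw [heq] at hle
    have hhle : hinge ≤ C * ∑ i, ζ i := by
      apply mul_le_mul_of_nonneg_left _ hC.le
      exact Finset.sum_le_sum fun i _ => max_le (hζ i) (hg i)
    have : ((hinge : ℝ) : EReal) + ((∑ m, ‖w m‖ ^ 2 / (2 * θ m) : ℝ) : EReal)
        ≤ ((C * ∑ i, ζ i + ∑ m, ‖w m‖ ^ 2 / (2 * θ m) : ℝ) : EReal) := by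
      rw [← EReal.coe_add]
      exact_mod_cast by linarith
    have h1 := le_trans hle this
    have h2 : ((C * ∑ i, ζ i + ∑ m, ‖w m‖ ^ 2 / (2 * θ m) : ℝ) : EReal) < ((c : ℝ) : EReal) := by
      exact_mod_cast hsc
    exact absurd (lt_of_le_of_lt h1 (lt_trans h2 hc2)) (lt_irrefl _)
  · -- p ≤ every element
    apply le_sInf
    rintro r ⟨w, b, θ, hθ0, hθ1, rfl⟩
    by_cases hz : ∀ m, θ m = 0 → w m = 0
    · rw [ennpart_eq hθ0 hz]
      rw [← EReal.coe_add, EReal.coe_le_coe_iff]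
      set hinge : ℝ := C * ∑ i, max 0 (1 - y i * ((∑ m, ⟪w m, v m i⟫) + b)) with hhinge
      set B : ℝ := ∑ m, ‖w m‖ ^ 2 / (2 * θ m) with hB
      have hBnn : 0 ≤ B :=
        Finset.sum_nonneg fun m _ => div_nonneg (sq_nonneg _) (by have := hθ0 m; positivity)
      apply eps_le
      intro ε hε
      set δ : ℝ := ε / (B + 2 * ε) with hδ
      have hδpos : 0 < δ := by positivity
      have hδlt : δ < 1 := by
        rw [hδ, div_lt_one (by positivity)]
        linarith
      set θδ : Fin M → ℝ := fun m => (1 - δ) * θ m + δ * (M : ℝ)⁻¹ with hθδ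
      have hMpos : (0:ℝ) < M := by exact_mod_cast hM
      have hθδpos : ∀ m, 0 < θδ m := by
        intro m
        have h1 : 0 ≤ (1 - δ) * θ m := mul_nonneg (by linarith) (hθ0 m)
        have h2 : 0 < δ * (M : ℝ)⁻¹ := by positivity
        simp only [hθδ]
        linarith
      have hθδ1 : (∑ m, θδ m) ≤ 1 := by
        simp only [hθδ]
        rw [Finset.sum_add_distrib, ← Finset.mul_sum, ← Finset.mul_sum]
        rw [Finset.sum_const, Finset.card_univ, Fintype.card_fin, nsmul_eq_mul]
        rw [mul_inv_cancel₀ (ne_of_gt hMpos)]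
        have : (1 - δ) * (∑ m, θ m) ≤ (1 - δ) * 1 := by
          apply mul_le_mul_of_nonneg_left hθ1 (by linarith)
        linarith
      -- per-term bound
      have hterm : ∀ m, ‖w m‖ ^ 2 / (2 * θδ m) ≤ (1 - δ)⁻¹ * (‖w m‖ ^ 2 / (2 * θ m)) := by
        intro m
        by_cases hwm : w m = 0
        · have h0 : ‖w m‖ ^ 2 = 0 := by simp [hwm]
          simp [h0]
        · have hθm : 0 < θ m := by
            rcases eq_or_lt_of_le (hθ0 m) with h | h
            · exact absurd (hz m h.symm) hwm
            · exact h
          have hlb : 2 * ((1 - δ) * θ m) ≤ 2 * θδ m := by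
            have : 0 < δ * (M : ℝ)⁻¹ := by positivity
            simp only [hθδ]
            linarith
          have h1 : ‖w m‖ ^ 2 / (2 * θδ m) ≤ ‖w m‖ ^ 2 / (2 * ((1 - δ) * θ m)) := by
            exact div_le_div_of_nonneg_left (sq_nonneg _)
              (mul_pos two_pos (mul_pos (by linarith) hθm)) hlb
          have h2 : ‖w m‖ ^ 2 / (2 * ((1 - δ) * θ m)) = (1 - δ)⁻¹ * (‖w m‖ ^ 2 / (2 * θ m)) := by
            field_simp
          linarith
      have hsum : ∑ m, ‖w m‖ ^ 2 / (2 * θδ m) ≤ (1 - δ)⁻¹ * B := by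
        rw [hB, Finset.mul_sum]
        exact Finset.sum_le_sum fun m _ => hterm m
      have hbound : (1 - δ)⁻¹ * B ≤ B + ε := by
        have h1δ : 1 - δ = (B + ε) / (B + 2 * ε) := by
          rw [hδ]
          field_simp
          ring
        rw [h1δ, inv_div, div_mul_eq_mul_div, div_le_iff₀ (by positivity)]
        nlinarith [sq_nonneg ε]
      -- the Sreal member
      have hmem : (C * ∑ i, max 0 (1 - y i * ((∑ m, ⟪w m, v m i⟫) + b))
          + ∑ m, ‖w m‖ ^ 2 / (2 * θδ m)) ∈ SrealSet v y C := by
        refine ⟨w, b, θδ, fun i => max 0 (1 - y i * ((∑ m, ⟪w m, v m i⟫) + b)),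
          hθδpos, hθδ1, fun i => le_max_left _ _, fun i => le_max_right _ _, rfl⟩
      have hple := csInf_le ⟨0, fun s hs => sreal_lower v y C hC.le s hs⟩ hmem
      have : ∑ m, ‖w m‖ ^ 2 / (2 * θδ m) ≤ B + ε := le_trans hsum hbound
      rw [← hp] at hple
      simp only [← hhinge] at hple ⊢
      linarith
    · -- some θ m = 0 with w m ≠ 0 : the value is ⊤
      push_neg at hz
      obtain ⟨m₀, hm₀, hwm₀⟩ := hz
      have htop : (∑ m, ENNReal.ofReal (‖w m‖ ^ 2) / ENNReal.ofReal (θ m)) = ⊤ := by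
        rw [ENNReal.sum_eq_top]
        refine ⟨m₀, Finset.mem_univ _, ?_⟩
        rw [hm₀]
        simp only [ENNReal.ofReal_zero]
        rw [ENNReal.div_zero]
        exact ne_of_gt (ENNReal.ofReal_pos.2 (pow_pos (norm_pos_iff.mpr hwm₀) 2))
      rw [htop]
      rw [ENNReal.top_div_of_ne_top (by norm_num : (2:ℝ≥0∞) ≠ ⊤)]
      rw [EReal.coe_ennreal_top, EReal.add_top_of_ne_bot (EReal.coe_ne_bot _)]
      exact le_top
end MKL5

section STRONG
variable {n M : ℕ} {H : Fin M → Type*} [∀ m, NormedAddCommGroup (H m)]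
  [∀ m, InnerProductSpace ℝ (H m)]
  (v : ∀ m, Fin n → H m) (y : Fin n → ℝ) (C : ℝ)

lemma inner_swap (w : ∀ m, H m) (α : Fin n → ℝ) :
    ∑ i, α i * (y i * (∑ m, ⟪w m, v m i⟫)) = ∑ m, ⟪w m, ∑ i, (y i * α i) • v m i⟫ := by
  have h : ∀ i, α i * (y i * (∑ m, ⟪w m, v m i⟫)) = ∑ m, ⟪w m, (y i * α i) • v m i⟫ := by
    intro i
    rw [Finset.mul_sum, Finset.mul_sum]
    apply Finset.sum_congr rfl
    intro m _
    rw [real_inner_smul_right]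
    ring
  rw [Finset.sum_congr rfl fun i _ => h i, Finset.sum_comm]
  apply Finset.sum_congr rfl
  intro m _
  rw [← inner_sum]

set_option maxHeartbeats 1000000 in
lemma strong (hM : 0 < M) (hC : 0 < C) :
    sInf (SrealSet v y C) ≤ sSup (Dset2 v y C) := by
  set p : ℝ := sInf (SrealSet v y C) with hp
  set D : ℝ := sSup (Dset2 v y C) with hD
  have hMpos : (0:ℝ) < M := by exact_mod_cast hM
  have hbddD : BddAbove (Dset2 v y C) := ⟨n * C, fun r hr => dset2_bdd v y C hM r hr⟩
  have hbddS : BddBelow (SrealSet v y C) := ⟨0, fun s hs => sreal_lower v y C hC.le s hs⟩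
  apply eps_le
  intro δ hδ
  -- the "achievable" set in ℝ^n × ℝ
  set A : Set ((Fin n → ℝ) × ℝ) := {e | ∃ (w : ∀ m, H m) (b : ℝ) (θ : Fin M → ℝ) (ζ : Fin n → ℝ),
    (∀ m, 0 < θ m) ∧ (∑ m, θ m) ≤ 1 ∧ (∀ i, 0 ≤ ζ i) ∧
    (∀ i, 1 - y i * ((∑ m, ⟪w m, v m i⟫) + b) - ζ i ≤ e.1 i) ∧
    C * ∑ i, ζ i + ∑ m, ‖w m‖ ^ 2 / (2 * θ m) ≤ e.2} with hA
  -- convexity of A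
  have hAconv : Convex ℝ A := by
    rintro ⟨u, r⟩ ⟨w, b, θ, ζ, hθ, hθ1, hζ, hg, hF⟩ ⟨u', r'⟩ ⟨w', b', θ', ζ', hθ', hθ1', hζ', hg', hF'⟩
      a a' ha ha' haa
    rcases eq_or_lt_of_le ha with rfl | hapos
    · have ha1 : a' = 1 := by linarith
      subst ha1
      simpa using ⟨w', b', θ', ζ', hθ', hθ1', hζ', hg', hF'⟩
    rcases eq_or_lt_of_le ha' with rfl | ha'pos
    · have ha1 : a = 1 := by linarith
      subst ha1
      simpa using ⟨w, b, θ, ζ, hθ, hθ1, hζ, hg, hF⟩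
    refine ⟨fun m => a • w m + a' • w' m, a * b + a' * b', fun m => a * θ m + a' * θ' m,
      fun i => a * ζ i + a' * ζ' i, ?_, ?_, ?_, ?_, ?_⟩
    · intro m
      exact add_pos (mul_pos hapos (hθ m)) (mul_pos ha'pos (hθ' m))
    · rw [Finset.sum_add_distrib, ← Finset.mul_sum, ← Finset.mul_sum]
      have h1 : a * (∑ m, θ m) ≤ a * 1 := mul_le_mul_of_nonneg_left hθ1 ha
      have h2 : a' * (∑ m, θ' m) ≤ a' * 1 := mul_le_mul_of_nonneg_left hθ1' ha'
      linarith
    · intro i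
      exact add_nonneg (mul_nonneg ha (hζ i)) (mul_nonneg ha' (hζ' i))
    · intro i
      have hf : (∑ m, ⟪a • w m + a' • w' m, v m i⟫)
          = a * (∑ m, ⟪w m, v m i⟫) + a' * (∑ m, ⟪w' m, v m i⟫) := by
        rw [Finset.mul_sum, Finset.mul_sum, ← Finset.sum_add_distrib]
        apply Finset.sum_congr rfl
        intro m _
        rw [inner_add_left, real_inner_smul_left, real_inner_smul_left]
      have e1 := mul_le_mul_of_nonneg_left (hg i) ha
      have e2 := mul_le_mul_of_nonneg_left (hg' i) ha'
      simp only [Prod.smul_fst, Prod.fst_add, Pi.add_apply, Pi.smul_apply, smul_eq_mul, hf]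
      nlinarith [e1, e2]
    · have hquad : ∀ m, ‖a • w m + a' • w' m‖ ^ 2 / (2 * (a * θ m + a' * θ' m))
          ≤ a * (‖w m‖ ^ 2 / (2 * θ m)) + a' * (‖w' m‖ ^ 2 / (2 * θ' m)) := by
        intro m
        have hs : (0:ℝ) < 2 * a * θ m := mul_pos (mul_pos two_pos hapos) (hθ m)
        have ht : (0:ℝ) < 2 * a' * θ' m := mul_pos (mul_pos two_pos ha'pos) (hθ' m)
        have hp1 := persp (a • w m) (a' • w' m) hs ht
        have e1 : ‖a • w m‖ ^ 2 / (2 * a * θ m) = a * (‖w m‖ ^ 2 / (2 * θ m)) := by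
          rw [norm_smul, Real.norm_eq_abs, abs_of_pos hapos]
          field_simp [(hθ m).ne']
        have e2 : ‖a' • w' m‖ ^ 2 / (2 * a' * θ' m) = a' * (‖w' m‖ ^ 2 / (2 * θ' m)) := by
          rw [norm_smul, Real.norm_eq_abs, abs_of_pos ha'pos]
          field_simp [(hθ' m).ne']
        have e3 : 2 * a * θ m + 2 * a' * θ' m = 2 * (a * θ m + a' * θ' m) := by ring
        rw [e3, e1, e2] at hp1
        exact hp1
      have hsq : ∑ m, ‖a • w m + a' • w' m‖ ^ 2 / (2 * (a * θ m + a' * θ' m))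
          ≤ a * (∑ m, ‖w m‖ ^ 2 / (2 * θ m)) + a' * (∑ m, ‖w' m‖ ^ 2 / (2 * θ' m)) := by
        rw [Finset.mul_sum, Finset.mul_sum, ← Finset.sum_add_distrib]
        exact Finset.sum_le_sum fun m _ => hquad m
      have hz1 : C * ∑ i, (a * ζ i + a' * ζ' i)
          = a * (C * ∑ i, ζ i) + a' * (C * ∑ i, ζ' i) := by
        rw [Finset.sum_add_distrib, ← Finset.mul_sum, ← Finset.mul_sum]
        ring
      have e1 := mul_le_mul_of_nonneg_left hF ha
      have e2 := mul_le_mul_of_nonneg_left hF' ha'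
      simp only [Prod.smul_snd, Prod.snd_add, smul_eq_mul]
      linarith
  -- q = (0, p - δ) is not in A
  have hqA : ((0 : Fin n → ℝ), p - δ) ∉ A := by
    rintro ⟨w, b, θ, ζ, hθ, hθ1, hζ, hg, hF⟩
    have hmem : (C * ∑ i, ζ i + ∑ m, ‖w m‖ ^ 2 / (2 * θ m)) ∈ SrealSet v y C := by
      refine ⟨w, b, θ, ζ, hθ, hθ1, hζ, fun i => ?_, rfl⟩
      have := hg i
      simp only [Pi.zero_apply] at this
      linarith
    have h1 : p ≤ C * ∑ i, ζ i + ∑ m, ‖w m‖ ^ 2 / (2 * θ m) := csInf_le hbddS hmem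
    simp only at hF
    linarith
  -- an open subset of A
  set O : Set ((Fin n → ℝ) × ℝ) := {e | (∀ i, -1 < e.1 i) ∧ C * (2 * n) < e.2} with hO
  have hOopen : IsOpen O := by
    have h1 : IsOpen {e : (Fin n → ℝ) × ℝ | ∀ i, -1 < e.1 i} := by
      have : {e : (Fin n → ℝ) × ℝ | ∀ i, -1 < e.1 i} = ⋂ i, {e | -1 < e.1 i} := by
        ext e; simp
      rw [this]
      exact isOpen_iInter_of_finite fun i =>
        isOpen_lt continuous_const ((continuous_apply i).comp continuous_fst)
    have h2 : IsOpen {e : (Fin n → ℝ) × ℝ | C * (2 * n) < e.2} :=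
      isOpen_lt continuous_const continuous_snd
    exact (h1.inter h2)
  have hOA : O ⊆ A := by
    rintro ⟨u, r⟩ ⟨hu, hr⟩
    refine ⟨fun m => 0, 0, fun m => (M : ℝ)⁻¹, fun i => 2, fun m => by positivity, ?_, ?_, ?_, ?_⟩
    · show (∑ _m : Fin M, (M:ℝ)⁻¹) ≤ 1
      rw [Finset.sum_const, Finset.card_univ, Fintype.card_fin, nsmul_eq_mul,
        mul_inv_cancel₀ (ne_of_gt hMpos)]
    · intro i; norm_num
    · intro i
      show (1:ℝ) - y i * ((∑ m : Fin M, ⟪(0 : H m), v m i⟫) + 0) - 2 ≤ (u, r).1 i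
      have h0 : (∑ m : Fin M, ⟪(0 : H m), v m i⟫) = (0:ℝ) := by simp
      rw [h0]
      have h1 : y i * ((0:ℝ) + 0) = 0 := by ring
      rw [h1]
      linarith [hu i]
    · show C * (∑ _i : Fin n, (2:ℝ)) + ∑ m : Fin M, ‖(0 : H m)‖ ^ 2 / (2 * (M:ℝ)⁻¹) ≤ (u, r).2
      have h2 : (∑ m : Fin M, ‖(0 : H m)‖ ^ 2 / (2 * (M:ℝ)⁻¹)) = 0 := by simp
      rw [h2, Finset.sum_const, Finset.card_univ, Fintype.card_fin, nsmul_eq_mul, add_zero]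
      have h3 : C * ((n:ℝ) * 2) = C * (2 * n) := by ring
      rw [h3]
      linarith [hr]
  -- interior of A is nonempty
  have ha₀ : ((fun _ => (0:ℝ) : Fin n → ℝ), C * (2 * n) + 1) ∈ interior A := by
    apply interior_maximal hOA hOopen
    constructor
    · intro i; norm_num
    · simp only
      linarith
  -- separation
  obtain ⟨φ, hφ⟩ := geometric_hahn_banach_open_point (hAconv.interior) isOpen_interior
    (fun hmem => hqA (interior_subset hmem))
  -- φ ≤ φ q on all of A
  have hφA : ∀ a ∈ A, φ a ≤ φ ((0 : Fin n → ℝ), p - δ) := by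
    intro e heA
    by_contra hgt
    push_neg at hgt
    set e₀ : (Fin n → ℝ) × ℝ := ((fun _ => (0:ℝ) : Fin n → ℝ), C * (2 * n) + 1) with he₀
    set S : ℝ := φ e - φ e₀ with hSdef
    set eps : ℝ := φ e - φ ((0 : Fin n → ℝ), p - δ) with heps
    have hepspos : 0 < eps := by simp only [heps]; linarith
    set t : ℝ := min 1 (eps / (2 * (|S| + 1))) with ht
    have ht0 : 0 < t := by
      apply lt_min one_pos
      positivity
    have ht1 : t ≤ 1 := min_le_left _ _
    have hcombo := hAconv.combo_interior_self_mem_interior ha₀ heA ht0 (by linarith : (0:ℝ) ≤ 1 - t)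
      (by ring)
    have hlt := hφ _ hcombo
    rw [φ.map_add, φ.map_smul, φ.map_smul, smul_eq_mul, smul_eq_mul] at hlt
    -- hlt : t * φ e₀ + (1 - t) * φ e < φ q
    have hkey : eps < t * S := by simp only [heps, hSdef]; nlinarith
    have htS : t * S ≤ eps / 2 := by
      have h1 : t * S ≤ t * |S| := mul_le_mul_of_nonneg_left (le_abs_self S) ht0.le
      have h2 : t * |S| ≤ (eps / (2 * (|S| + 1))) * |S| :=
        mul_le_mul_of_nonneg_right (min_le_right _ _) (abs_nonneg S)
      have h3 : (eps / (2 * (|S| + 1))) * |S| ≤ eps / 2 := by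
        rw [div_mul_eq_mul_div, div_le_div_iff₀ (by positivity) two_pos]
        nlinarith [abs_nonneg S]
      linarith
    linarith
  -- decomposition of φ into coordinates
  have hdecomp : ∀ (u : Fin n → ℝ) (r : ℝ),
      φ (u, r) = (∑ i, u i * φ ((Pi.single i 1 : Fin n → ℝ), 0)) + r * φ ((0 : Fin n → ℝ), 1) := by
    intro u r
    have h1 : ((u, r) : (Fin n → ℝ) × ℝ)
        = (∑ i, u i • ((Pi.single i 1 : Fin n → ℝ), (0:ℝ))) + r • ((0 : Fin n → ℝ), (1:ℝ)) := by
      apply Prod.ext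
      · rw [Prod.fst_add, Prod.fst_sum, Prod.smul_fst]
        simp only [Prod.smul_fst, Prod.smul_snd, smul_zero, add_zero]
        funext j
        rw [Finset.sum_apply]
        simp [Pi.single_apply, mul_ite]
      · rw [Prod.snd_add, Prod.snd_sum, Prod.smul_snd]
        simp only [Prod.smul_snd, smul_eq_mul, mul_zero, mul_one]
        simp
    rw [h1, φ.map_add, map_sum, φ.map_smul, smul_eq_mul]
    congr 1
    apply Finset.sum_congr rfl
    intro i _
    rw [φ.map_smul, smul_eq_mul]
  -- coefficients
  set β : Fin n → ℝ := fun i => -φ ((Pi.single i 1 : Fin n → ℝ), 0) with hβ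
  set μ : ℝ := -φ ((0 : Fin n → ℝ), 1) with hμ
  have hφq : φ ((0 : Fin n → ℝ), p - δ) = -μ * (p - δ) := by
    rw [hdecomp]
    simp only [Pi.zero_apply, zero_mul, Finset.sum_const_zero, zero_add, hμ]
    ring
  -- the reference point of A
  set a₁ : (Fin n → ℝ) × ℝ := ((fun _ => (-1:ℝ) : Fin n → ℝ), C * (2 * n)) with ha₁
  have ha₁A : a₁ ∈ A := by
    refine ⟨fun m => 0, 0, fun m => (M : ℝ)⁻¹, fun i => 2, fun m => by positivity, ?_, ?_, ?_, ?_⟩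
    · show (∑ _m : Fin M, (M:ℝ)⁻¹) ≤ 1
      rw [Finset.sum_const, Finset.card_univ, Fintype.card_fin, nsmul_eq_mul,
        mul_inv_cancel₀ (ne_of_gt hMpos)]
    · intro i; norm_num
    · intro i
      show (1:ℝ) - y i * ((∑ m : Fin M, ⟪(0 : H m), v m i⟫) + 0) - 2 ≤ a₁.1 i
      have h0 : (∑ m : Fin M, ⟪(0 : H m), v m i⟫) = (0:ℝ) := by simp
      rw [h0]
      have h1 : y i * ((0:ℝ) + 0) = 0 := by ring
      rw [h1]
      show (1:ℝ) - 0 - 2 ≤ -1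
      norm_num
    · show C * (∑ _i : Fin n, (2:ℝ)) + ∑ m : Fin M, ‖(0 : H m)‖ ^ 2 / (2 * (M:ℝ)⁻¹) ≤ a₁.2
      have h2 : (∑ m : Fin M, ‖(0 : H m)‖ ^ 2 / (2 * (M:ℝ)⁻¹)) = 0 := by simp
      rw [h2, Finset.sum_const, Finset.card_univ, Fintype.card_fin, nsmul_eq_mul, add_zero]
      show C * ((n:ℝ) * 2) ≤ C * (2 * (n:ℝ))
      linarith
  set θ₀ : Fin M → ℝ := fun _ => (M : ℝ)⁻¹ with hθ₀
  have hθ₀pos : ∀ m, 0 < θ₀ m := fun m => by positivity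
  have hθ₀1 : (∑ m, θ₀ m) ≤ 1 := by
    rw [hθ₀, Finset.sum_const, Finset.card_univ, Fintype.card_fin, nsmul_eq_mul,
      mul_inv_cancel₀ (ne_of_gt hMpos)]
  -- membership of points with large coordinates
  have hA1 : ∀ (u : Fin n → ℝ) (r : ℝ), (∀ j, (-1:ℝ) ≤ u j) → C * (2 * n) ≤ r → (u, r) ∈ A := by
    intro u r hu hr
    refine ⟨fun m => 0, 0, θ₀, fun i => 2, hθ₀pos, hθ₀1, fun i => by norm_num, ?_, ?_⟩
    · intro i
      show (1:ℝ) - y i * ((∑ m : Fin M, ⟪(0 : H m), v m i⟫) + 0) - 2 ≤ u i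
      have h0 : (∑ m : Fin M, ⟪(0 : H m), v m i⟫) = (0:ℝ) := by simp
      rw [h0]
      have h1 : y i * ((0:ℝ) + 0) = 0 := by ring
      rw [h1]
      linarith [hu i]
    · show C * (∑ _i : Fin n, (2:ℝ)) + ∑ m : Fin M, ‖(0 : H m)‖ ^ 2 / (2 * θ₀ m) ≤ r
      have h2 : (∑ m : Fin M, ‖(0 : H m)‖ ^ 2 / (2 * θ₀ m)) = 0 := by simp
      rw [h2, Finset.sum_const, Finset.card_univ, Fintype.card_fin, nsmul_eq_mul, add_zero]
      have h3 : C * ((n:ℝ) * 2) = C * (2 * n) := by ring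
      rw [h3]
      exact hr
  -- computing φ on such perturbed points
  have hsingle : ∀ (i : Fin n) (t : ℝ),
      (∑ j, ((fun _ => (-1:ℝ)) j + t * ((Pi.single i 1 : Fin n → ℝ) j)) * φ ((Pi.single j 1 : Fin n → ℝ), 0))
      = (∑ j, (-1) * φ ((Pi.single j 1 : Fin n → ℝ), 0)) + t * φ ((Pi.single i 1 : Fin n → ℝ), 0) := by
    intro i t
    have hterm : ∀ j, ((fun _ => (-1:ℝ)) j + t * ((Pi.single i 1 : Fin n → ℝ) j))
          * φ ((Pi.single j 1 : Fin n → ℝ), 0)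
        = (-1) * φ ((Pi.single j 1 : Fin n → ℝ), 0)
          + (t * ((Pi.single i 1 : Fin n → ℝ) j)) * φ ((Pi.single j 1 : Fin n → ℝ), 0) := by
      intro j; ring
    rw [Finset.sum_congr rfl fun j _ => hterm j, Finset.sum_add_distrib]
    congr 1
    rw [Finset.sum_eq_single i (fun j _ hji => by rw [Pi.single_apply, if_neg hji]; ring)
      (fun h => absurd (Finset.mem_univ i) h)]
    rw [Pi.single_eq_same]
    ring
  -- sign of β
  have hβ0 : ∀ i, 0 ≤ β i := by
    intro i
    have hlin : ∀ t : ℝ, 0 ≤ t →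
        φ ((Pi.single i 1 : Fin n → ℝ), 0) * t
          ≤ φ ((0 : Fin n → ℝ), p - δ) - φ a₁ := by
      intro t ht
      have hmem : ((fun j => (-1:ℝ) + t * ((Pi.single i 1 : Fin n → ℝ) j) : Fin n → ℝ), C * (2 * n)) ∈ A := by
        apply hA1
        · intro j
          have : 0 ≤ t * (Pi.single i 1 : Fin n → ℝ) j := by
            apply mul_nonneg ht
            rw [Pi.single_apply]
            split <;> norm_num
          linarith
        · exact le_refl _
      have hle := hφA _ hmem
      rw [hdecomp, hsingle i t] at hle
      have ha₁eq : φ a₁ = (∑ j, (-1) * φ ((Pi.single j 1 : Fin n → ℝ), 0))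
          + (C * (2 * n)) * φ ((0 : Fin n → ℝ), 1) := by
        rw [ha₁, hdecomp]
      linarith
    have := lin_upper hlin
    rw [hβ]
    simp only
    linarith [this]
  -- sign of μ
  have hμ0 : 0 ≤ μ := by
    have hlin : ∀ t : ℝ, 0 ≤ t →
        φ ((0 : Fin n → ℝ), 1) * t ≤ φ ((0 : Fin n → ℝ), p - δ) - φ a₁ := by
      intro t ht
      have hmem : ((fun _ => (-1:ℝ) : Fin n → ℝ), C * (2 * n) + t) ∈ A := by
        apply hA1
        · intro j; exact le_refl _
        · linarith
      have hle := hφA _ hmem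
      rw [hdecomp] at hle
      have ha₁eq : φ a₁ = (∑ j, (-1) * φ ((Pi.single j 1 : Fin n → ℝ), 0))
          + (C * (2 * n)) * φ ((0 : Fin n → ℝ), 1) := by
        rw [ha₁, hdecomp]
      have hexp : (∑ j, (-1:ℝ) * φ ((Pi.single j 1 : Fin n → ℝ), 0))
          + (C * (2 * n) + t) * φ ((0 : Fin n → ℝ), 1)
          = φ a₁ + t * φ ((0 : Fin n → ℝ), 1) := by
        rw [ha₁eq]; ring
      rw [hexp] at hle
      linarith
    have := lin_upper hlin
    rw [hμ]
    linarith [this]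
  -- the key Lagrangian inequality
  have hKI : ∀ (w : ∀ m, H m) (b : ℝ) (θ : Fin M → ℝ) (ζ : Fin n → ℝ),
      (∀ m, 0 < θ m) → (∑ m, θ m) ≤ 1 → (∀ i, 0 ≤ ζ i) →
      μ * (p - δ) ≤ (∑ i, β i * (1 - y i * ((∑ m, ⟪w m, v m i⟫) + b) - ζ i))
        + μ * (C * ∑ i, ζ i + ∑ m, ‖w m‖ ^ 2 / (2 * θ m)) := by
    intro w b θ ζ hθ hθ1 hζ
    have hmem : ((fun i => 1 - y i * ((∑ m, ⟪w m, v m i⟫) + b) - ζ i : Fin n → ℝ),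
        C * ∑ i, ζ i + ∑ m, ‖w m‖ ^ 2 / (2 * θ m)) ∈ A :=
      ⟨w, b, θ, ζ, hθ, hθ1, hζ, fun i => le_refl _, le_refl _⟩
    have hle := hφA _ hmem
    rw [hdecomp, hφq] at hle
    have hb : ∀ i, (1 - y i * ((∑ m, ⟪w m, v m i⟫) + b) - ζ i) * φ ((Pi.single i 1 : Fin n → ℝ), 0)
        = -(β i * (1 - y i * ((∑ m, ⟪w m, v m i⟫) + b) - ζ i)) := by
      intro i
      rw [hβ]
      simp only
      ring
    rw [Finset.sum_congr rfl fun i _ => hb i, Finset.sum_neg_distrib] at hle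
    have hμφ : φ ((0 : Fin n → ℝ), 1) = -μ := by rw [hμ]; ring
    rw [hμφ] at hle
    linarith
  -- positivity of μ
  have hμpos : 0 < μ := by
    rcases eq_or_lt_of_le hμ0 with hzero | hpos
    · exfalso
      have hKI0 := hKI (fun m => 0) 0 θ₀ (fun i => 2) hθ₀pos hθ₀1 (fun i => by norm_num)
      rw [← hzero] at hKI0
      have hg0 : ∀ i, (1 : ℝ) - y i * ((∑ m, ⟪(0 : H m), v m i⟫) + 0) - 2 = -1 := by
        intro i
        have h0 : (∑ m : Fin M, ⟪(0 : H m), v m i⟫) = (0:ℝ) := by simp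
        rw [h0]
        ring
      have hsimp : (∑ i, β i * ((1 : ℝ) - y i * ((∑ m, ⟪(0 : H m), v m i⟫) + 0) - 2))
          = ∑ i, -β i := by
        apply Finset.sum_congr rfl
        intro i _
        rw [hg0 i]
        ring
      rw [hsimp] at hKI0
      simp only [zero_mul, add_zero] at hKI0
      have hβsum : (∑ i, β i) ≤ 0 := by
        rw [Finset.sum_neg_distrib] at hKI0
        linarith [hKI0]
      have hβall : ∀ i, β i = 0 := by
        intro i
        have h1 : (∑ i, β i) = 0 := le_antisymm hβsum (Finset.sum_nonneg fun i _ => hβ0 i)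
        have := (Finset.sum_eq_zero_iff_of_nonneg (fun i _ => hβ0 i)).1 h1 i (Finset.mem_univ i)
        exact this
      -- φ is identically zero
      have hφzero : ∀ e : (Fin n → ℝ) × ℝ, φ e = 0 := by
        intro e
        have : φ (e.1, e.2) = 0 := by
          rw [hdecomp]
          have h1 : ∀ i, e.1 i * φ ((Pi.single i 1 : Fin n → ℝ), 0) = 0 := by
            intro i
            have : φ ((Pi.single i 1 : Fin n → ℝ), 0) = 0 := by
              have := hβall i
              rw [hβ] at this
              simp only at this
              linarith
            rw [this, mul_zero]
          have h2 : φ ((0 : Fin n → ℝ), 1) = 0 := by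
            have : -φ ((0 : Fin n → ℝ), 1) = 0 := by rw [← hμ, ← hzero]
            linarith
          rw [Finset.sum_congr rfl fun i _ => h1 i, h2]
          simp
        rw [Prod.mk.eta] at this
        exact this
      have hlt := hφ _ ha₀
      rw [hφzero, hφzero] at hlt
      exact absurd hlt (lt_irrefl 0)
    · exact hpos
  -- the normalized multipliers
  set α : Fin n → ℝ := fun i => β i / μ with hα
  have hα0 : ∀ i, 0 ≤ α i := fun i => div_nonneg (hβ0 i) hμpos.le
  have hKIα : ∀ (w : ∀ m, H m) (b : ℝ) (θ : Fin M → ℝ) (ζ : Fin n → ℝ),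
      (∀ m, 0 < θ m) → (∑ m, θ m) ≤ 1 → (∀ i, 0 ≤ ζ i) →
      p - δ ≤ (∑ i, α i * (1 - y i * ((∑ m, ⟪w m, v m i⟫) + b) - ζ i))
        + (C * ∑ i, ζ i + ∑ m, ‖w m‖ ^ 2 / (2 * θ m)) := by
    intro w b θ ζ hθ hθ1 hζ
    have h := hKI w b θ ζ hθ hθ1 hζ
    have hβμ : ∀ i, β i * (1 - y i * ((∑ m, ⟪w m, v m i⟫) + b) - ζ i)
        = μ * (α i * (1 - y i * ((∑ m, ⟪w m, v m i⟫) + b) - ζ i)) := by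
      intro i
      rw [hα]
      field_simp
    rw [Finset.sum_congr rfl fun i _ => hβμ i, ← Finset.mul_sum] at h
    have h2 : μ * (p - δ) ≤ μ * ((∑ i, α i * (1 - y i * ((∑ m, ⟪w m, v m i⟫) + b) - ζ i))
        + (C * ∑ i, ζ i + ∑ m, ‖w m‖ ^ 2 / (2 * θ m))) := by
      rw [mul_add]
      linarith
    exact (mul_le_mul_iff_right₀ hμpos).1 h2
  -- α i ≤ C
  have hzeroinner : ∀ i, (∑ m : Fin M, ⟪(0 : H m), v m i⟫) = (0:ℝ) := fun i => by simp
  have hzeroquad : (∑ m : Fin M, ‖(0 : H m)‖ ^ 2 / (2 * θ₀ m)) = 0 := by simp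
  have hαC : ∀ j, α j ≤ C := by
    intro j
    have hlin : ∀ t : ℝ, 0 ≤ t → p - δ ≤ (∑ i, α i) + (C - α j) * t := by
      intro t ht
      have hζt : ∀ i, (0:ℝ) ≤ (Pi.single j t : Fin n → ℝ) i := by
        intro i
        rw [Pi.single_apply]
        split <;> simp [ht]
      have h := hKIα (fun m => 0) 0 θ₀ (Pi.single j t) hθ₀pos hθ₀1 hζt
      have hsum1 : (∑ i, α i * (1 - y i * ((∑ m, ⟪(0 : H m), v m i⟫) + 0)
            - (Pi.single j t : Fin n → ℝ) i))
          = (∑ i, α i) - α j * t := by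
        have hterm : ∀ i, α i * (1 - y i * ((∑ m, ⟪(0 : H m), v m i⟫) + 0)
              - (Pi.single j t : Fin n → ℝ) i)
            = α i - α i * (Pi.single j t : Fin n → ℝ) i := by
          intro i
          rw [hzeroinner i]
          ring
        rw [Finset.sum_congr rfl fun i _ => hterm i, Finset.sum_sub_distrib]
        congr 1
        rw [Finset.sum_eq_single j (fun i _ hij => by rw [Pi.single_apply, if_neg hij, mul_zero])
          (fun h => absurd (Finset.mem_univ j) h)]
        rw [Pi.single_eq_same]
      have hsum2 : (∑ i, (Pi.single j t : Fin n → ℝ) i) = t := by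
        rw [Finset.sum_eq_single j (fun i _ hij => by rw [Pi.single_apply, if_neg hij])
          (fun h => absurd (Finset.mem_univ j) h), Pi.single_eq_same]
      rw [hsum1, hsum2, hzeroquad] at h
      linarith
    have := lin_lower (a := C - α j) (c := ∑ i, α i) (d := p - δ) hlin
    linarith
  -- the balance condition
  have hbal : (∑ i, y i * α i) = 0 := by
    have hkey : ∀ s : ℝ, p - δ ≤ (∑ i, α i) - s * (∑ i, α i * y i) := by
      intro s
      have h := hKIα (fun m => 0) s θ₀ (fun i => 0) hθ₀pos hθ₀1 (fun i => le_refl 0)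
      have hsum1 : (∑ i, α i * (1 - y i * ((∑ m, ⟪(0 : H m), v m i⟫) + s) - 0))
          = (∑ i, α i) - s * (∑ i, α i * y i) := by
        rw [Finset.mul_sum, ← Finset.sum_sub_distrib]
        apply Finset.sum_congr rfl
        intro i _
        rw [hzeroinner i]
        ring
      rw [hsum1, hzeroquad] at h
      simp only [Finset.sum_const_zero, mul_zero, add_zero, zero_add] at h
      linarith
    have h1 : 0 ≤ -(∑ i, α i * y i) := by
      apply lin_lower (c := ∑ i, α i) (d := p - δ)
      intro t ht
      have := hkey t
      linarith
    have h2 : 0 ≤ (∑ i, α i * y i) := by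
      apply lin_lower (c := ∑ i, α i) (d := p - δ)
      intro t ht
      have := hkey (-t)
      linarith
    have h3 : (∑ i, α i * y i) = 0 := le_antisymm (by linarith) h2
    rw [← h3]
    apply Finset.sum_congr rfl
    intro i _
    ring
  -- the optimal kernel weights
  obtain ⟨mstar, _, hmstar⟩ := Finset.exists_max_image (Finset.univ : Finset (Fin M))
    (fun m => qm' v y m α) ⟨⟨0, hM⟩, Finset.mem_univ _⟩
  have hQsup : (⨆ m, qm' v y m α) = qm' v y mstar α :=
    le_antisymm (sup_qm_le v y hM fun m => hmstar m (Finset.mem_univ m))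
      (le_sup_qm v y mstar α)
  set U : ∀ m, H m := fun m => ∑ i, (y i * α i) • v m i with hU
  have hQU : ∀ m, qm' v y m α = ‖U m‖ ^ 2 := fun m => qm'_eq v y m α
  have hfinal : ∀ σ : ℝ, 0 < σ → σ < 1 →
      p - δ ≤ ((∑ i, α i) - (1/2) * qm' v y mstar α) + σ * ((1/2) * qm' v y mstar α) := by
    intro σ hσ0 hσ1
    set θσ : Fin M → ℝ := fun m => (1 - σ) * (if m = mstar then 1 else 0) + σ * (M:ℝ)⁻¹ with hθσ
    have hθσpos : ∀ m, 0 < θσ m := by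
      intro m
      have h1 : 0 ≤ (1 - σ) * (if m = mstar then 1 else 0) := by
        apply mul_nonneg (by linarith)
        split <;> norm_num
      have h2 : 0 < σ * (M:ℝ)⁻¹ := by positivity
      simp only [hθσ]
      linarith
    have hθσ1 : (∑ m, θσ m) ≤ 1 := by
      simp only [hθσ]
      rw [Finset.sum_add_distrib, ← Finset.mul_sum, ← Finset.mul_sum]
      rw [Finset.sum_ite_eq' Finset.univ mstar (fun _ => (1:ℝ))]
      rw [Finset.sum_const, Finset.card_univ, Fintype.card_fin, nsmul_eq_mul,
        mul_inv_cancel₀ (ne_of_gt hMpos)]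
      simp
    have h := hKIα (fun m => θσ m • U m) 0 θσ (fun i => 0) hθσpos hθσ1 (fun i => le_refl 0)
    -- compute the linear part
    have hlinpart : (∑ i, α i * (1 - y i * ((∑ m, ⟪θσ m • U m, v m i⟫) + 0) - 0))
        = (∑ i, α i) - ∑ m, θσ m * ‖U m‖ ^ 2 := by
      have hsplit : ∀ i, α i * (1 - y i * ((∑ m, ⟪θσ m • U m, v m i⟫) + 0) - 0)
          = α i - α i * (y i * (∑ m, ⟪θσ m • U m, v m i⟫)) := by
        intro i; ring
      rw [Finset.sum_congr rfl fun i _ => hsplit i, Finset.sum_sub_distrib]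
      congr 1
      rw [inner_swap v y (fun m => θσ m • U m) α]
      apply Finset.sum_congr rfl
      intro m _
      rw [real_inner_smul_left,
        show (∑ i, (y i * α i) • v m i) = U m from rfl, real_inner_self_eq_norm_sq]
    -- compute the quadratic part
    have hquadpart : (∑ m, ‖θσ m • U m‖ ^ 2 / (2 * θσ m))
        = ∑ m, θσ m * ‖U m‖ ^ 2 / 2 := by
      apply Finset.sum_congr rfl
      intro m _
      rw [norm_smul, Real.norm_eq_abs, abs_of_pos (hθσpos m), mul_pow]
      field_simp [(hθσpos m).ne']
    rw [hlinpart, hquadpart] at h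
    simp only [Finset.sum_const_zero, mul_zero, zero_add] at h
    -- h : p - δ ≤ (∑ α) - ∑ θσ ‖U‖² + ∑ θσ ‖U‖²/2
    have hsumdiv : (∑ m, θσ m * ‖U m‖ ^ 2 / 2) = (∑ m, θσ m * ‖U m‖ ^ 2) / 2 := by
      rw [Finset.sum_div]
    have hlb : (1 - σ) * qm' v y mstar α ≤ ∑ m, θσ m * ‖U m‖ ^ 2 := by
      have hterms : ∀ m, θσ m * ‖U m‖ ^ 2
          = (1 - σ) * (if m = mstar then 1 else 0) * ‖U m‖ ^ 2 + σ * (M:ℝ)⁻¹ * ‖U m‖ ^ 2 := by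
        intro m
        simp only [hθσ]
        ring
      rw [Finset.sum_congr rfl fun m _ => hterms m, Finset.sum_add_distrib]
      have h1 : (∑ m, (1 - σ) * (if m = mstar then 1 else 0) * ‖U m‖ ^ 2)
          = (1 - σ) * ‖U mstar‖ ^ 2 := by
        rw [Finset.sum_eq_single mstar (fun m _ hm => by rw [if_neg hm]; ring)
          (fun hm => absurd (Finset.mem_univ mstar) hm)]
        rw [if_pos rfl]
        ring
      rw [h1, ← hQU mstar]
      have h2 : 0 ≤ ∑ m, σ * (M:ℝ)⁻¹ * ‖U m‖ ^ 2 :=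
        Finset.sum_nonneg fun m _ => by positivity
      linarith
    rw [hsumdiv] at h
    have hQnn : 0 ≤ qm' v y mstar α := qm'_nonneg v y mstar α
    linarith
  have hval : p - δ ≤ (∑ i, α i) - (1/2) * qm' v y mstar α :=
    sigma_le (mul_nonneg (by norm_num) (qm'_nonneg v y mstar α))
      (fun σ h1 h2 => hfinal σ h1 h2)
  have hmem : ((∑ i, α i) - (1/2) * ⨆ m, qm' v y m α) ∈ Dset2 v y C :=
    ⟨α, ⟨hbal, fun i => ⟨hα0 i, hαC i⟩⟩, rfl⟩
  have hle := le_csSup hbddD hmem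
  rw [hQsup] at hle
  linarith
end STRONG

section FINAL
variable {n M : ℕ} {H : Fin M → Type*} [∀ m, NormedAddCommGroup (H m)]
  [∀ m, InnerProductSpace ℝ (H m)]
  (v : ∀ m, Fin n → H m) (y : Fin n → ℝ) (C : ℝ)

lemma master (hM : 0 < M) (hC : 0 < C) :
    sInf {r : EReal | ∃ (w : ∀ m, H m) (b : ℝ) (θ : Fin M → ℝ),
        (∀ m, 0 ≤ θ m) ∧ (∑ m, θ m) ≤ 1 ∧
        r = ((C * ∑ i, max 0 (1 - y i * ((∑ m, ⟪w m, v m i⟫) + b)) : ℝ) : EReal) +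
            (((∑ m, ENNReal.ofReal (‖w m‖ ^ 2) / ENNReal.ofReal (θ m)) / 2 : ℝ≥0∞) : EReal)}
      = ((sSup (Dset1 v y C) : ℝ) : EReal) ∧ sSup (Dset1 v y C) = sSup (Dset2 v y C) := by
  have hweak : sSup (Dset2 v y C) ≤ sInf (SrealSet v y C) := by
    apply le_csInf ⟨C * n, sreal_nonempty v y C hM⟩
    intro s hs
    apply csSup_le ⟨0, dset2_nonempty v y C hM hC.le⟩
    intro d hd
    exact weak v y C hM hs hd
  have hstrong := strong v y C hM hC
  have heq : sInf (SrealSet v y C) = sSup (Dset2 v y C) := le_antisymm hstrong hweak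
  constructor
  · rw [bridge v y C hM hC, heq, dual_eq v y C hM hC.le]
  · exact dual_eq v y C hM hC.le
end FINAL

/-- The dual of ℓ1-regularized MKL with hinge loss is the QCQP of Lanckriet et al.:
`sup_{α,ξ} 1ᵀα − ξ` s.t. `(1/2)αᵀYK_mYα ≤ ξ ∀m`, `yᵀα = 0`, `0 ≤ α ≤ C1`;
equivalently it equals `sup_α 1ᵀα − (1/2) max_m αᵀYK_mYα` over the feasible `α`.
Here `K_m` is the Gram matrix of the feature map `ψ_m` and `Y = diag(y)`. -/
theorem l1_mkl_dual_qcqp {X : Type*} (n M : ℕ) (hM : 0 < M)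
    (H : Fin M → Type*) [∀ m, NormedAddCommGroup (H m)] [∀ m, InnerProductSpace ℝ (H m)]
    (ψ : ∀ m, X → H m) (x : Fin n → X) (y : Fin n → ℝ)
    (hy : ∀ i, y i = 1 ∨ y i = -1) (C : ℝ) (hC : 0 < C) :
    let K : Fin M → Matrix (Fin n) (Fin n) ℝ := fun m =>
      Matrix.of fun i j => ⟪ψ m (x i), ψ m (x j)⟫
    let quad : Fin M → (Fin n → ℝ) → ℝ := fun m α =>
      (fun i => y i * α i) ⬝ᵥ (K m *ᵥ fun i => y i * α i)
    let Feas : (Fin n → ℝ) → Prop := fun α =>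
      (∑ i, y i * α i) = 0 ∧ ∀ i, 0 ≤ α i ∧ α i ≤ C
    let primal : EReal := sInf {r : EReal |
      ∃ (w : ∀ m, H m) (b : ℝ) (θ : Fin M → ℝ),
        (∀ m, 0 ≤ θ m) ∧ (∑ m, θ m) ≤ 1 ∧
        r = ((C * ∑ i, max 0 (1 - y i * ((∑ m, ⟪w m, ψ m (x i)⟫) + b)) : ℝ) : EReal) +
            (((∑ m, ENNReal.ofReal (‖w m‖ ^ 2) / ENNReal.ofReal (θ m)) / 2 : ℝ≥0∞) : EReal)}
    let dualQCQP : ℝ := sSup {r : ℝ | ∃ (α : Fin n → ℝ) (ξ : ℝ), Feas α ∧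
        (∀ m, (1 / 2) * quad m α ≤ ξ) ∧ r = (∑ i, α i) - ξ}
    let dualMax : ℝ := sSup {r : ℝ | ∃ α : Fin n → ℝ, Feas α ∧
        r = (∑ i, α i) - (1 / 2) * ⨆ m, quad m α}
    primal = ((dualQCQP : ℝ) : EReal) ∧ dualQCQP = dualMax := by
  intro K quad Feas primal dualQCQP dualMax
  exact master (fun m i => ψ m (x i)) y C hM hC
end
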